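/- arXiv:math/9810013 — 4 statements merged into one kernel-verified Lean document; each statement's English description precedes it below -/
import Mathlib

section
/- Eynard–Mehta determinantal formula for two coupled matrices: for all integers k, l with 0 ≤ k ≤ N and 0 ≤ l ≤ N and all real numbers x₁,…,x_k, y₁,…,y_l, ρ_{k,l}(x₁,…,x_k; y₁,…,y_l) equals the determinant of the (k+l) × (k+l) block matrix whose blocks are [K₁₁(x_r,x_s)]_{r,s=1}^{k} (upper left), [K₁₂(x_r,y_s)]_{r=1..k, s=1..l} (upper right), [K₂₁(y_r,x_s)]_{r=1..l, s=1..k} (lower left), and [K₂₂(y_r,y_s)]_{r,s=1}^{l} (lower right), where K₁₁(x,x′) = ∫_ℝ H(x,s) w(s,x′) ds, K₁₂(x,y) = H(x,y), K₂₁(y,x) = ∬_{ℝ²} w(y,r) H(r,s) w(s,x) dr ds − w(y,x), and K₂₂(y,y′) = ∫_ℝ w(y,r) H(r,y′) dr. -/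
open MeasureTheory Polynomial

/-- The joint eigenvalue density
`p_N(x;y) = (1/(N!)²) · det[w(y_i,x_j)] · det[P_{i−1}(x_j)] · det[Q_{i−1}(y_j)]`. -/
noncomputable def jointDensity (N : ℕ) (w : ℝ → ℝ → ℝ) (P Q : Fin N → Polynomial ℝ)
    (x y : Fin N → ℝ) : ℝ :=
  (1 / (N.factorial : ℝ) ^ 2) *
    Matrix.det (Matrix.of fun i j : Fin N => w (y i) (x j)) *
    Matrix.det (Matrix.of fun i j : Fin N => (P i).eval (x j)) *
    Matrix.det (Matrix.of fun i j : Fin N => (Q i).eval (y j))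

/-- The correlation functions
`ρ_{k,l}(x₁,…,x_k; y₁,…,y_l) = ((N!)²/((N−k)!(N−l)!)) ∫∫ p_N dx_{k+1}⋯dx_N dy_{l+1}⋯dy_N`. -/
noncomputable def corrFun (N : ℕ) (w : ℝ → ℝ → ℝ) (P Q : Fin N → Polynomial ℝ)
    (k l : ℕ) (hk : k ≤ N) (hl : l ≤ N) (x : Fin k → ℝ) (y : Fin l → ℝ) : ℝ :=
  ((N.factorial : ℝ) ^ 2 / (((N - k).factorial : ℝ) * ((N - l).factorial : ℝ))) *
    ∫ u : Fin (N - k) → ℝ, ∫ v : Fin (N - l) → ℝ,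
      jointDensity N w P Q
        (fun i => Fin.append x u (Fin.cast (by omega) i))
        (fun i => Fin.append y v (Fin.cast (by omega) i))

/-- `H(x,y) = Σ_{i=0}^{N−1} Pᵢ(x) Qᵢ(y)`. -/
noncomputable def Hker (N : ℕ) (P Q : Fin N → Polynomial ℝ) (x y : ℝ) : ℝ :=
  ∑ i : Fin N, (P i).eval x * (Q i).eval y

/-!
Tag each point by its species, `inl` for an `x` and `inr` for a `y`, and let `K` be the kernel
whose four blocks are `K₁₁, K₁₂, K₂₁, K₂₂` with `H = ∑ₙ Pₙ ⊗ Qₙ` expanded. The kernel matrix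
factors as a block lower-triangular matrix with diagonal blocks `[Pₙ(xⱼ)]ᵀ` and `1` times
`[[(Qₙw)(xⱼ), Qₙ(yⱼ)], [-w(yᵢ, xⱼ), 0]]`. On `N` points of each species its determinant is
therefore `det[Pᵢ(xⱼ)] · det[Qᵢ(yⱼ)] · det[w(yᵢ, xⱼ)] = (N!)² p_N`.

Biorthogonality makes `K` reproducing: `∫ K(u, t) K(t, v) dt` is `K(u, v)` or `0` according to
the species of `u` when `t` is an `x`, and of `v` when `t` is a `y`; moreover `∫ K(t, t) dt = N`.
Expanding a bordered determinant along its border with the adjugate then gives Gaudin's lemma: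
integrating out one point multiplies the kernel determinant by `N` minus the number of remaining
points of its species. Integrating out `N - l` points `y` and then `N - k` points `x` produces
the factor `(N - l)! (N - k)!` of the normalisation of `ρ_{k,l}`.
-/

open Matrix

namespace Matrix

variable {R : Type*} [CommRing R] {m n : Type*} [Fintype m] [Fintype n] [DecidableEq m]
  [DecidableEq n]

theorem det_fromBlocks_mul_det_pow (A : Matrix m m R) (B : Matrix m n R) (C : Matrix n m R)
    (D : Matrix n n R) :
    (fromBlocks A B C D).det * A.det ^ Fintype.card n =
      A.det * (A.det • D - C * A.adjugate * B).det := by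
  have h : fromBlocks A B C D * fromBlocks 1 (-(A.adjugate * B)) 0 (A.det • 1) =
      fromBlocks A 0 C (A.det • D - C * A.adjugate * B) := by
    simp only [fromBlocks_multiply, ← Matrix.mul_assoc, mul_adjugate, Matrix.mul_neg,
      Matrix.mul_smul, Matrix.mul_one, Matrix.mul_zero, Matrix.smul_mul, Matrix.one_mul, add_zero]
    congr 1 <;> module
  simpa [det_fromBlocks_zero₂₁, det_fromBlocks_zero₁₂, det_smul] using congrArg det h

theorem det_fromBlocks_replicateCol_mul_det (A : Matrix m m R) (c r : m → R) (d : R) :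
    (fromBlocks A (replicateCol (Fin 1) c) (replicateRow (Fin 1) r) (of fun _ _ => d)).det *
      A.det = A.det * (d * A.det - r ⬝ᵥ (A.adjugate *ᵥ c)) := by
  convert det_fromBlocks_mul_det_pow A (replicateCol (Fin 1) c) (replicateRow (Fin 1) r)
    (of fun _ _ => d) using 2
  · simp
  · rw [dotProduct_mulVec]
    simp [mul_comm d, vecMul, dotProduct, Matrix.mul_apply]

theorem det_fromBlocks_replicateCol_replicateRow (A : Matrix m m R) (c r : m → R) (d : R) :
    (fromBlocks A (replicateCol (Fin 1) c) (replicateRow (Fin 1) r) (of fun _ _ => d)).det =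
      d * A.det - r ⬝ᵥ (A.adjugate *ᵥ c) := by
  -- `A` is the value at `X = 0` of `X • 1 + A`, whose determinant is monic, hence cancellable
  -- in the previous identity over `R[X]`.
  set A' : Matrix m m R[X] := charmatrix (-A)
  have hA' : A'.det.Monic := charpoly_monic (-A)
  have key := det_fromBlocks_replicateCol_mul_det A' (C ∘ c) (C ∘ r) (C d)
  rw [mul_comm, hA'.isRegular.left.eq_iff] at key
  have hA : (evalRingHom 0).mapMatrix A' = A := by
    ext i j
    by_cases h : i = j <;> simp [A', h]
  have hv : ⇑(evalRingHom 0) ∘ (A'.adjugate *ᵥ C ∘ c) = A.adjugate *ᵥ c := by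
    ext i
    rw [Function.comp_apply, RingHom.map_mulVec, ← RingHom.mapMatrix_apply,
      RingHom.map_adjugate, hA]
    congr 1
    ext
    simp
  have key0 := congrArg (evalRingHom 0) key
  rw [RingHom.map_det, RingHom.map_sub, RingHom.map_mul, RingHom.map_det, RingHom.map_dotProduct,
    hv, hA] at key0
  convert key0 using 2
  · ext (i | i) (j | j) <;> simp [← hA]
  · simp
  · congr 1
    ext
    simp

theorem det_fromBlocks_neg_zero (A B C : Matrix n n R) :
    (fromBlocks A B (-C) 0).det = B.det * C.det := by
  have h : fromBlocks A B (-C) 0 = fromBlocks B (B - A) 0 C * fromBlocks 1 1 (-1) 0 := by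
    simp [fromBlocks_multiply]
  rw [h, det_mul, det_fromBlocks_zero₂₁, det_fromBlocks_one₁₁]
  simp

theorem det_mul_det_eq_sum (A : Matrix m m R) (B : Matrix n n R) :
    A.det * B.det = ∑ p : Equiv.Perm m × Equiv.Perm n,
      ((Equiv.Perm.sign p.1 : ℤ) * (Equiv.Perm.sign p.2 : ℤ) : R) *
        ((∏ i, A (p.1 i) i) * ∏ j, B (p.2 j) j) := by
  rw [det_apply', det_apply', Finset.sum_mul_sum, ← Finset.univ_product_univ, Finset.sum_product]
  refine Finset.sum_congr rfl fun σ _ => Finset.sum_congr rfl fun τ _ => ?_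
  push_cast
  ring

end Matrix

def kernelMatrix {ι α R : Type*} (K : α → α → R) (z : ι → α) : Matrix ι ι R :=
  of fun i j => K (z i) (z j)

section KernelDeterminant

variable {ι α : Type*} [Fintype ι] [DecidableEq ι]

theorem det_kernelMatrix_comp_equiv {ι' : Type*} [Fintype ι'] [DecidableEq ι']
    (K : α → α → ℝ) (z : ι → α) (e : ι' ≃ ι) :
    (kernelMatrix K (z ∘ e)).det = (kernelMatrix K z).det :=
  det_submatrix_equiv_self e (kernelMatrix K z)

theorem det_kernelMatrix_flip (K : α → α → ℝ) (z : ι → α) :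
    (kernelMatrix (flip K) z).det = (kernelMatrix K z).det :=
  det_transpose _

variable {Ω : Type*} [MeasurableSpace Ω] {μ : Measure Ω}

theorem integral_det_fromBlocks_replicateCol_replicateRow (κ : Matrix ι ι ℝ) (c r : Ω → ι → ℝ)
    (d : Ω → ℝ) (ε : ι → ℝ) (hd : Integrable d μ)
    (hcr : ∀ u v, Integrable (fun t => c t u * r t v) μ)
    (hrep : ∀ u v, ∫ t, c t u * r t v ∂μ = ε u * κ u v) :
    ∫ t, (fromBlocks κ (replicateCol (Fin 1) (c t)) (replicateRow (Fin 1) (r t))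
      (of fun _ _ => d t)).det ∂μ = ((∫ t, d t ∂μ) - ∑ u, ε u) * κ.det := by
  have hexp : ∀ t, (fromBlocks κ (replicateCol (Fin 1) (c t)) (replicateRow (Fin 1) (r t))
      (of fun _ _ => d t)).det =
        d t * κ.det - ∑ u, ∑ v, κ.adjugate v u * (c t u * r t v) := by
    intro t
    rw [det_fromBlocks_replicateCol_replicateRow]
    simp only [dotProduct, mulVec, Finset.mul_sum]
    rw [Finset.sum_comm]
    congr 1
    exact Finset.sum_congr rfl fun u _ => Finset.sum_congr rfl fun v _ => by ring
  have hint : ∀ u v, Integrable (fun t => κ.adjugate v u * (c t u * r t v)) μ :=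
    fun u v => (hcr u v).const_mul _
  have hrow : ∀ u, ∑ v, κ.adjugate v u * (ε u * κ u v) = ε u * κ.det := by
    intro u
    have h := congrFun (congrFun (mul_adjugate κ) u) u
    simp only [Matrix.mul_apply, Matrix.smul_apply, one_apply_eq, smul_eq_mul, mul_one] at h
    rw [← h, Finset.mul_sum]
    exact Finset.sum_congr rfl fun v _ => by ring
  simp_rw [hexp]
  rw [integral_sub (hd.mul_const _) (integrable_finsetSum _ fun u _ =>
    integrable_finsetSum _ fun v _ => hint u v), integral_mul_const,
    integral_finsetSum _ fun u _ => integrable_finsetSum _ fun v _ => hint u v]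
  simp_rw [integral_finsetSum _ fun v _ => hint _ v, integral_const_mul, hrep, hrow,
    ← Finset.sum_mul]
  ring

theorem integral_det_kernelMatrix_sum_elim (K : α → α → ℝ) (e : Ω → α) (ε : α → ℝ)
    (z : ι → α) (hdiag : Integrable (fun t => K (e t) (e t)) μ)
    (hint : ∀ a b, Integrable (fun t => K a (e t) * K (e t) b) μ)
    (hrep : ∀ a b, ∫ t, K a (e t) * K (e t) b ∂μ = ε a * K a b) :
    ∫ t, (kernelMatrix K (Sum.elim z fun _ : Fin 1 => e t)).det ∂μ =
      ((∫ t, K (e t) (e t) ∂μ) - ∑ i, ε (z i)) * (kernelMatrix K z).det := by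
  have hblocks : ∀ t, kernelMatrix K (Sum.elim z fun _ : Fin 1 => e t) =
      fromBlocks (kernelMatrix K z) (replicateCol (Fin 1) fun i => K (z i) (e t))
        (replicateRow (Fin 1) fun j => K (e t) (z j)) (of fun _ _ => K (e t) (e t)) := by
    intro t
    ext (i | i) (j | j) <;> rfl
  simp_rw [hblocks]
  exact integral_det_fromBlocks_replicateCol_replicateRow _ _ _ _ _ hdiag
    (fun _ _ => hint _ _) (fun _ _ => hrep _ _)

end KernelDeterminant

section SumIntegrals

variable {Ω : Type*} [MeasurableSpace Ω] {μ : Measure Ω} {ι : Type*} [Fintype ι]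

theorem integrable_and_integral_sum_mul_sum {f g : ι → Ω → ℝ}
    (hfg : ∀ i j, Integrable (fun t => f i t * g j t) μ) (a b : ι → ℝ) :
    Integrable (fun t => (∑ i, a i * f i t) * ∑ j, g j t * b j) μ ∧
      ∫ t, (∑ i, a i * f i t) * (∑ j, g j t * b j) ∂μ =
        ∑ i, ∑ j, a i * b j * ∫ t, f i t * g j t ∂μ := by
  have hpt : (fun t => (∑ i, a i * f i t) * ∑ j, g j t * b j) =
      fun t => ∑ i, ∑ j, a i * b j * (f i t * g j t) := by
    ext t
    rw [Finset.sum_mul_sum]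
    exact Finset.sum_congr rfl fun i _ => Finset.sum_congr rfl fun j _ => by ring
  have hint : ∀ i j, Integrable (fun t => a i * b j * (f i t * g j t)) μ :=
    fun i j => (hfg i j).const_mul _
  rw [hpt]
  refine ⟨integrable_finsetSum _ fun i _ => integrable_finsetSum _ fun j _ => hint i j, ?_⟩
  rw [integral_finsetSum _ fun i _ => integrable_finsetSum _ fun j _ => hint i j]
  simp_rw [integral_finsetSum _ fun j _ => hint _ j, integral_const_mul]

theorem integrable_and_integral_sum_mul {f : ι → Ω → ℝ} {h : Ω → ℝ}
    (hf : ∀ i, Integrable (fun t => f i t * h t) μ) (a : ι → ℝ) :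
    Integrable (fun t => (∑ i, a i * f i t) * h t) μ ∧
      ∫ t, (∑ i, a i * f i t) * h t ∂μ = ∑ i, a i * ∫ t, f i t * h t ∂μ := by
  have hpt : (fun t => (∑ i, a i * f i t) * h t) = fun t => ∑ i, a i * (f i t * h t) := by
    ext t
    rw [Finset.sum_mul]
    exact Finset.sum_congr rfl fun i _ => by ring
  rw [hpt]
  refine ⟨integrable_finsetSum _ fun i _ => (hf i).const_mul _, ?_⟩
  rw [integral_finsetSum _ fun i _ => (hf i).const_mul _]
  simp_rw [integral_const_mul]

theorem integrable_and_integral_mul_sum {g : ι → Ω → ℝ} {h : Ω → ℝ}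
    (hg : ∀ j, Integrable (fun t => h t * g j t) μ) (b : ι → ℝ) :
    Integrable (fun t => h t * ∑ j, g j t * b j) μ ∧
      ∫ t, h t * (∑ j, g j t * b j) ∂μ = ∑ j, (∫ t, h t * g j t ∂μ) * b j := by
  have hpt : (fun t => h t * ∑ j, g j t * b j) = fun t => ∑ j, (h t * g j t) * b j := by
    ext t
    rw [Finset.mul_sum]
    exact Finset.sum_congr rfl fun j _ => by ring
  rw [hpt]
  refine ⟨integrable_finsetSum _ fun j _ => (hg j).mul_const _, ?_⟩
  rw [integral_finsetSum _ fun j _ => (hg j).mul_const _]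
  simp_rw [integral_mul_const]

end SumIntegrals

section Append

variable {α : Type*} {k m N : ℕ}

def Fin.appendCast (h : k + m = N) (x : Fin k → α) (u : Fin m → α) : Fin N → α :=
  fun i => Fin.append x u (Fin.cast h.symm i)

theorem Fin.appendCast_zero (h : N + 0 = N) (x : Fin N → α) (u : Fin 0 → α) :
    Fin.appendCast h x u = x := by
  ext i
  simp [Fin.appendCast, Fin.append_right_nil]

theorem Fin.appendCast_cons (h : k + (m + 1) = N) (t : α) (x : Fin k → α) (u : Fin m → α) :
    Fin.appendCast h x (Fin.cons t u) =
      Fin.appendCast (by omega : k + 1 + m = N) (Fin.snoc x t) u := by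
  ext i
  simp only [Fin.appendCast, Fin.append_right_cons]
  rfl

theorem Fin.prod_appendCast {M : Type*} [CommMonoid M] (h : k + m = N) (g : Fin N → α → M)
    (x : Fin k → α) (u : Fin m → α) :
    ∏ i, g i (Fin.appendCast h x u i) =
      (∏ a, g (Fin.cast h (Fin.castAdd m a)) (x a)) *
        ∏ b, g (Fin.cast h (Fin.natAdd k b)) (u b) := by
  rw [← (finCongr h).prod_comp, Fin.prod_univ_add]
  simp [Fin.appendCast]

end Append

theorem integral_fin_succ_cons {E : Type*} [MeasureSpace E] [SigmaFinite (volume : Measure E)]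
    {m : ℕ} {f : (Fin (m + 1) → E) → ℝ} (hf : Integrable f) :
    ∫ v, f v = ∫ t, ∫ u : Fin m → E, f (Fin.cons t u) := by
  have mp := (measurePreserving_piFinSuccAbove (fun _ : Fin (m + 1) => (volume : Measure E)) 0).symm
  rw [volume_pi, ← mp.integral_comp', integral_prod]
  · simp [volume_pi, MeasurableEquiv.piFinSuccAbove_symm_apply, Fin.insertNthEquiv]
  · exact (mp.integrable_comp_emb (MeasurableEquiv.measurableEmbedding _)).mpr
      (by rwa [← volume_pi])

theorem integrable_prod_appendCast {k m N : ℕ} (h : k + m = N) (x : Fin k → ℝ)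
    {g : Fin N → ℝ → ℝ} (hg : ∀ i, Integrable (g i)) :
    Integrable fun u : Fin m → ℝ => ∏ i, g i (Fin.appendCast h x u i) := by
  simp_rw [Fin.prod_appendCast]
  exact (Integrable.fintype_prod fun b => hg _).const_mul _

theorem integral_appendCast_eq_factorial_mul {N : ℕ} (G : ∀ n, (Fin n → ℝ) → ℝ)
    (hint : ∀ {k m} (h : k + m = N) (x : Fin k → ℝ),
      Integrable fun u : Fin m → ℝ => G N (Fin.appendCast h x u))
    (hstep : ∀ k < N, ∀ x : Fin k → ℝ, ∫ t, G (k + 1) (Fin.snoc x t) = (N - k) * G k x)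
    {k m : ℕ} (h : k + m = N) (x : Fin k → ℝ) :
    ∫ u : Fin m → ℝ, G N (Fin.appendCast h x u) = m.factorial * G k x := by
  induction m generalizing k with
  | zero =>
    subst h
    simp [Fin.appendCast_zero, volume_pi, measureReal_def]
  | succ m ih =>
    rw [integral_fin_succ_cons (hint h x)]
    simp_rw [Fin.appendCast_cons, ih, integral_const_mul, hstep k (by omega) x]
    rw [show (N : ℝ) - k = m + 1 by rw [← h]; push_cast; ring, Nat.factorial_succ]
    push_cast
    ring

namespace EynardMehta

variable {N : ℕ}

section Kernel

variable (w : ℝ → ℝ → ℝ) (P Q : Fin N → ℝ[X])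

noncomputable def Qw (n : Fin N) (t : ℝ) : ℝ := ∫ s, (Q n).eval s * w s t

noncomputable def wP (n : Fin N) (t : ℝ) : ℝ := ∫ s, (P n).eval s * w t s

/-- `inl` tags a point `x` of the first matrix and `inr` a point `y` of the second; the four
cases are the kernels `K₁₁, K₁₂, K₂₁, K₂₂` with the integrals against `H` carried out. -/
noncomputable def kernel : ℝ ⊕ ℝ → ℝ ⊕ ℝ → ℝ
  | .inl a, .inl b => ∑ n, (P n).eval a * Qw w Q n b
  | .inl a, .inr d => ∑ n, (P n).eval a * (Q n).eval d
  | .inr c, .inl b => (∑ n, wP w P n c * Qw w Q n b) - w c b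
  | .inr c, .inr d => ∑ n, wP w P n c * (Q n).eval d

theorem kernel_inl_left (a : ℝ) (v : ℝ ⊕ ℝ) :
    kernel w P Q (.inl a) v = ∑ n, (P n).eval a * Sum.elim (Qw w Q n) (Q n).eval v := by
  cases v <;> rfl

theorem kernel_inr_right (u : ℝ ⊕ ℝ) (d : ℝ) :
    kernel w P Q u (.inr d) = ∑ n, Sum.elim (P n).eval (wP w P n) u * (Q n).eval d := by
  cases u <;> rfl

theorem kernelMatrix_eq_mul {l : ℕ} (X : Fin N → ℝ) (y : Fin l → ℝ) :
    kernelMatrix (kernel w P Q) (Sum.map X y) =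
      fromBlocks (of fun j n => (P n).eval (X j)) 0 (of fun c n => wP w P n (y c)) 1 *
        fromBlocks (of fun n b => Qw w Q n (X b)) (of fun n d => (Q n).eval (y d))
          (-of fun c b => w (y c) (X b)) 0 := by
  ext (i | i) (j | j) <;>
    simp [kernelMatrix, kernel, Matrix.mul_apply, Matrix.one_apply, sub_eq_add_neg]

theorem det_kernelMatrix_eq {l : ℕ} (X : Fin N → ℝ) (y : Fin l → ℝ) :
    (kernelMatrix (kernel w P Q) (Sum.map X y)).det =
      (of fun n j => (P n).eval (X j)).det *
        (fromBlocks (of fun n b => Qw w Q n (X b)) (of fun n d => (Q n).eval (y d))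
          (-of fun c b => w (y c) (X b)) 0).det := by
  rw [kernelMatrix_eq_mul, det_mul, det_fromBlocks_zero₁₂, det_one, mul_one, ← det_transpose]
  rfl

theorem det_kernelMatrix_square (X Y : Fin N → ℝ) :
    (kernelMatrix (kernel w P Q) (Sum.map X Y)).det =
      (of fun n j => (P n).eval (X j)).det * (of fun n j => (Q n).eval (Y j)).det *
        (of fun c b => w (Y c) (X b)).det := by
  rw [det_kernelMatrix_eq, det_fromBlocks_neg_zero, mul_assoc]

theorem jointDensity_eq_det_kernelMatrix (X Y : Fin N → ℝ) :
    jointDensity N w P Q X Y =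
      (kernelMatrix (kernel w P Q) (Sum.map X Y)).det / (N.factorial : ℝ) ^ 2 := by
  rw [jointDensity, det_kernelMatrix_square]
  ring

end Kernel

section Integrals

variable {w : ℝ → ℝ → ℝ} {P Q : Fin N → ℝ[X]}
  (hint2 : ∀ p q : ℝ[X], Integrable (fun s : ℝ × ℝ => p.eval s.1 * q.eval s.2 * w s.2 s.1))
  (hint1 : ∀ t : ℝ, ∀ p : ℝ[X],
    Integrable (fun s => p.eval s * w s t) ∧ Integrable (fun s => p.eval s * w t s))
  (horth : ∀ i j : Fin N,
    ∫ s : ℝ × ℝ, (P i).eval s.1 * (Q j).eval s.2 * w s.2 s.1 = if i = j then 1 else 0)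

include hint2 in
theorem integrable_Qw_mul (n : Fin N) (p : ℝ[X]) :
    Integrable fun t => Qw w Q n t * p.eval t := by
  convert (hint2 p (Q n)).integral_prod_left using 2 with t
  rw [Qw, ← integral_mul_const]
  exact integral_congr_ae (.of_forall fun s => by ring)

include hint2 in
theorem integrable_mul_wP (p : ℝ[X]) (n : Fin N) :
    Integrable fun t => p.eval t * wP w P n t := by
  convert (hint2 (P n) p).integral_prod_right using 2 with t
  rw [wP, ← integral_const_mul]
  exact integral_congr_ae (.of_forall fun s => by ring)

include hint2 horth in
theorem integral_Qw_mul (n m : Fin N) :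
    ∫ t, Qw w Q n t * (P m).eval t = if m = n then 1 else 0 := by
  rw [← horth m n, Measure.volume_eq_prod, integral_prod _ (hint2 _ _)]
  refine integral_congr_ae (.of_forall fun t => ?_)
  simp only [Qw, ← integral_mul_const]
  exact integral_congr_ae (.of_forall fun s => by ring)

include hint2 horth in
theorem integral_mul_wP (n m : Fin N) :
    ∫ t, (Q n).eval t * wP w P m t = if m = n then 1 else 0 := by
  rw [← horth m n, Measure.volume_eq_prod, integral_prod_symm _ (hint2 _ _)]
  refine integral_congr_ae (.of_forall fun t => ?_)
  simp only [wP, ← integral_const_mul]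
  exact integral_congr_ae (.of_forall fun s => by ring)

include hint2 hint1 horth in
theorem kernel_reproducing_inl (u v : ℝ ⊕ ℝ) :
    Integrable (fun t => kernel w P Q u (.inl t) * kernel w P Q (.inl t) v) ∧
      ∫ t, kernel w P Q u (.inl t) * kernel w P Q (.inl t) v =
        Sum.elim (fun _ => 1) (fun _ => 0) u * kernel w P Q u v := by
  set ψ : Fin N → ℝ := fun m => Sum.elim (Qw w Q m) (Q m).eval v
  have hsum := integrable_and_integral_sum_mul_sum (f := Qw w Q) (g := fun m t => (P m).eval t)
    (fun n m => integrable_Qw_mul hint2 n (P m))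
  cases u with
  | inl a =>
    obtain ⟨hi, hv⟩ := hsum (fun n => (P n).eval a) ψ
    simp only [kernel_inl_left, Sum.elim_inl]
    exact ⟨hi, by simp [hv, integral_Qw_mul hint2 horth, ψ]⟩
  | inr c =>
    obtain ⟨hi, hv⟩ := hsum (fun n => wP w P n c) ψ
    obtain ⟨hi', hv'⟩ := integrable_and_integral_mul_sum (h := w c)
      (g := fun m t => (P m).eval t) (fun m => by simpa only [mul_comm] using (hint1 c (P m)).2) ψ
    have hpt : (fun t => kernel w P Q (.inr c) (.inl t) * kernel w P Q (.inl t) v) =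
        fun t => (∑ n, wP w P n c * Qw w Q n t) * (∑ m, (P m).eval t * ψ m) -
          w c t * ∑ m, (P m).eval t * ψ m := by
      ext t
      rw [kernel_inl_left, ← sub_mul]
      rfl
    rw [hpt, integral_sub hi hi', hv, hv']
    exact ⟨hi.sub hi', by simp [integral_Qw_mul hint2 horth, wP, mul_comm]⟩

include hint2 hint1 horth in
theorem kernel_reproducing_inr (u v : ℝ ⊕ ℝ) :
    Integrable (fun t => kernel w P Q u (.inr t) * kernel w P Q (.inr t) v) ∧
      ∫ t, kernel w P Q u (.inr t) * kernel w P Q (.inr t) v =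
        Sum.elim (fun _ => 0) (fun _ => 1) v * kernel w P Q u v := by
  set φ : Fin N → ℝ := fun n => Sum.elim (P n).eval (wP w P n) u
  have hsum := integrable_and_integral_sum_mul_sum (f := fun n t => (Q n).eval t) (g := wP w P)
    (fun n m => integrable_mul_wP hint2 (Q n) m) φ
  cases v with
  | inr d =>
    obtain ⟨hi, hv⟩ := hsum fun m => (Q m).eval d
    simp only [kernel_inr_right, Sum.elim_inr]
    exact ⟨hi, by simp [hv, integral_mul_wP hint2 horth, φ]⟩
  | inl b =>
    obtain ⟨hi, hv⟩ := hsum fun m => Qw w Q m b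
    obtain ⟨hi', hv'⟩ := integrable_and_integral_sum_mul (f := fun n t => (Q n).eval t)
      (h := fun t => w t b) (fun n => (hint1 b (Q n)).1) φ
    have hpt : (fun t => kernel w P Q u (.inr t) * kernel w P Q (.inr t) (.inl b)) =
        fun t => (∑ n, φ n * (Q n).eval t) * (∑ m, wP w P m t * Qw w Q m b) -
          (∑ n, φ n * (Q n).eval t) * w t b := by
      ext t
      rw [kernel_inr_right, ← mul_sub]
      rfl
    rw [hpt, integral_sub hi hi', hv, hv']
    exact ⟨hi.sub hi', by simp [integral_mul_wP hint2 horth, Qw]⟩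

include hint2 horth in
theorem kernel_trace_inl :
    Integrable (fun t => kernel w P Q (.inl t) (.inl t)) ∧
      ∫ t, kernel w P Q (.inl t) (.inl t) = N := by
  have hint : ∀ n, Integrable fun t => (P n).eval t * Qw w Q n t := fun n => by
    simpa only [mul_comm] using integrable_Qw_mul hint2 n (P n)
  refine ⟨integrable_finsetSum _ fun n _ => hint n, ?_⟩
  change ∫ t, ∑ n, _ = _
  rw [integral_finsetSum _ fun n _ => hint n]
  simp [mul_comm, integral_Qw_mul hint2 horth]

include hint2 horth in
theorem kernel_trace_inr :
    Integrable (fun t => kernel w P Q (.inr t) (.inr t)) ∧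
      ∫ t, kernel w P Q (.inr t) (.inr t) = N := by
  have hint : ∀ n, Integrable fun t => wP w P n t * (Q n).eval t := fun n => by
    simpa only [mul_comm] using integrable_mul_wP hint2 (Q n) n
  refine ⟨integrable_finsetSum _ fun n _ => hint n, ?_⟩
  change ∫ t, ∑ n, _ = _
  rw [integral_finsetSum _ fun n _ => hint n]
  simp_rw [mul_comm (wP w P _ _), integral_mul_wP hint2 horth]
  simp

include hint2 hint1 horth in
theorem integral_det_kernelMatrix_snoc_left {k l : ℕ} (x : Fin k → ℝ) (y : Fin l → ℝ) :
    ∫ t, (kernelMatrix (kernel w P Q) (Sum.map (Fin.snoc x t : Fin (k + 1) → ℝ) y)).det =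
      (N - k) * (kernelMatrix (kernel w P Q) (Sum.map x y)).det := by
  have hz : ∀ t, Sum.map (Fin.snoc x t : Fin (k + 1) → ℝ) y =
      Sum.elim (Sum.map x y) (fun _ : Fin 1 => Sum.inl t) ∘
        ((Equiv.sumCongr finSumFinEquiv.symm (Equiv.refl _)).trans
          ((Equiv.sumAssoc _ _ _).trans ((Equiv.sumCongr (Equiv.refl _) (Equiv.sumComm _ _)).trans
            (Equiv.sumAssoc _ _ _).symm))) := by
    intro t
    ext (i | i)
    · induction i using Fin.lastCases <;> simp
    · simp
  simp_rw [hz, det_kernelMatrix_comp_equiv]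
  rw [integral_det_kernelMatrix_sum_elim _ _ _ _ (kernel_trace_inl hint2 horth).1
    (fun a b => (kernel_reproducing_inl hint2 hint1 horth a b).1)
    (fun a b => (kernel_reproducing_inl hint2 hint1 horth a b).2),
    (kernel_trace_inl hint2 horth).2]
  simp

include hint2 hint1 horth in
theorem integral_det_kernelMatrix_snoc_right {k l : ℕ} (x : Fin k → ℝ) (y : Fin l → ℝ) :
    ∫ t, (kernelMatrix (kernel w P Q) (Sum.map x (Fin.snoc y t : Fin (l + 1) → ℝ))).det =
      (N - l) * (kernelMatrix (kernel w P Q) (Sum.map x y)).det := by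
  have hz : ∀ t, Sum.map x (Fin.snoc y t : Fin (l + 1) → ℝ) =
      Sum.elim (Sum.map x y) (fun _ : Fin 1 => Sum.inr t) ∘
        ((Equiv.sumCongr (Equiv.refl _) finSumFinEquiv.symm).trans
          (Equiv.sumAssoc _ _ _).symm) := by
    intro t
    ext (i | i)
    · simp
    · induction i using Fin.lastCases <;> simp
  -- A point `y` is reproduced from the right, so integrate it out of the kernel matrix of `flip K`.
  simp_rw [hz, det_kernelMatrix_comp_equiv, ← det_kernelMatrix_flip (kernel w P Q)]
  rw [integral_det_kernelMatrix_sum_elim (flip (kernel w P Q)) Sum.inr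
    (Sum.elim (fun _ => 0) (fun _ => 1)) _ (kernel_trace_inr hint2 horth).1
    (fun a b => by
      simpa only [flip, mul_comm] using (kernel_reproducing_inr hint2 hint1 horth b a).1)
    (fun a b => by
      simpa only [flip, mul_comm] using (kernel_reproducing_inr hint2 hint1 horth b a).2),
    det_kernelMatrix_flip]
  simp [flip, (kernel_trace_inr hint2 horth).2]

include hint1 in
theorem integrable_det_kernelMatrix_appendCast_right {l m : ℕ} (h : l + m = N)
    (X : Fin N → ℝ) (y : Fin l → ℝ) :
    Integrable fun v : Fin m → ℝ =>
      (kernelMatrix (kernel w P Q) (Sum.map X (Fin.appendCast h y v))).det := by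
  have hexp : ∀ Y : Fin N → ℝ, (kernelMatrix (kernel w P Q) (Sum.map X Y)).det =
      ∑ p : Equiv.Perm (Fin N) × Equiv.Perm (Fin N),
        ((of fun n j => (P n).eval (X j)).det *
          ((Equiv.Perm.sign p.1 : ℤ) * (Equiv.Perm.sign p.2 : ℤ) : ℝ)) *
          ∏ j, ((Q (p.1 j)).eval (Y j) * w (Y j) (X (p.2 j))) := by
    intro Y
    rw [det_kernelMatrix_square, mul_assoc, ← det_transpose (of fun c b => w (Y c) (X b)),
      det_mul_det_eq_sum, Finset.mul_sum]
    refine Finset.sum_congr rfl fun p _ => ?_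
    simp only [transpose_apply, of_apply, Finset.prod_mul_distrib]
    ring
  simp_rw [hexp]
  exact integrable_finsetSum _ fun p _ =>
    (integrable_prod_appendCast h y fun j => (hint1 _ _).1).const_mul _

include hint2 hint1 in
theorem integrable_det_kernelMatrix_appendCast_left {k m l : ℕ} (h : k + m = N)
    (x : Fin k → ℝ) (y : Fin l → ℝ) :
    Integrable fun u : Fin m → ℝ =>
      (kernelMatrix (kernel w P Q) (Sum.map (Fin.appendCast h x u) y)).det := by
  set r : Fin N ⊕ Fin l → ℝ → ℝ := fun ρ t =>
    Sum.elim (fun n => Qw w Q n t) (fun c => -w (y c) t) ρ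
  set c : Fin N ⊕ Fin l → Fin l → ℝ := fun ρ d => Sum.elim (fun n => (Q n).eval (y d)) 0 ρ
  have hexp : ∀ X : Fin N → ℝ, (kernelMatrix (kernel w P Q) (Sum.map X y)).det =
      ∑ p : Equiv.Perm (Fin N) × Equiv.Perm (Fin N ⊕ Fin l),
        (((Equiv.Perm.sign p.1 : ℤ) * (Equiv.Perm.sign p.2 : ℤ) : ℝ) * ∏ d, c (p.2 (.inr d)) d) *
          ∏ b, ((P (p.1 b)).eval (X b) * r (p.2 (.inl b)) (X b)) := by
    intro X
    have hl : ∀ ρ b, fromBlocks (of fun n b => Qw w Q n (X b)) (of fun n d => (Q n).eval (y d))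
        (-of fun c b => w (y c) (X b)) 0 ρ (.inl b) = r ρ (X b) := by
      rintro (n | c) b <;> rfl
    have hr : ∀ ρ d, fromBlocks (of fun n b => Qw w Q n (X b)) (of fun n d => (Q n).eval (y d))
        (-of fun c b => w (y c) (X b)) 0 ρ (.inr d) = c ρ d := by
      rintro (n | c) d <;> rfl
    rw [det_kernelMatrix_eq, det_mul_det_eq_sum]
    refine Finset.sum_congr rfl fun p _ => ?_
    simp only [Fintype.prod_sum_type, hl, hr, of_apply, Finset.prod_mul_distrib]
    ring
  have hint : ∀ i ρ, Integrable fun t => (P i).eval t * r ρ t := by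
    rintro i (n | c)
    · simpa only [r, Sum.elim_inl, mul_comm] using integrable_Qw_mul hint2 n (P i)
    · convert (hint1 (y c) (P i)).2.neg using 1
      ext t
      simp [r]
  simp_rw [hexp]
  exact integrable_finsetSum _ fun p _ =>
    (integrable_prod_appendCast h x fun b => hint _ _).const_mul _

include hint1 in
theorem integral_Hker_mul (a b : ℝ) :
    ∫ t, Hker N P Q a t * w t b = ∑ n, (P n).eval a * Qw w Q n b :=
  (integrable_and_integral_sum_mul (f := fun n t => (Q n).eval t) (h := fun t => w t b)
    (fun n => (hint1 b (Q n)).1) _).2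

include hint1 in
theorem integral_mul_sum_eval_mul (c : ℝ) (β : Fin N → ℝ) :
    ∫ t, w c t * ∑ n, (P n).eval t * β n = ∑ n, wP w P n c * β n := by
  rw [(integrable_and_integral_mul_sum (g := fun n t => (P n).eval t) (h := w c)
    (fun n => by simpa only [mul_comm] using (hint1 c (P n)).2) β).2]
  simp_rw [wP, mul_comm (w c _)]

include hint1 in
theorem fromBlocks_eq_kernelMatrix {k l : ℕ} (x : Fin k → ℝ) (y : Fin l → ℝ) :
    fromBlocks (of fun r s => ∫ t, Hker N P Q (x r) t * w t (x s))
        (of fun r s => Hker N P Q (x r) (y s))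
        (of fun r s => (∫ t, ∫ t', w (y r) t * Hker N P Q t t' * w t' (x s)) - w (y r) (x s))
        (of fun r s => ∫ t, w (y r) t * Hker N P Q t (y s)) =
      kernelMatrix (kernel w P Q) (Sum.map x y) := by
  ext (r | r) (s | s)
  · exact integral_Hker_mul hint1 _ _
  · rfl
  · simp_rw [mul_assoc, integral_const_mul, integral_Hker_mul hint1,
      integral_mul_sum_eval_mul hint1]
    rfl
  · exact integral_mul_sum_eval_mul hint1 _ _

end Integrals

end EynardMehta

open EynardMehta

theorem eynard_mehta_general
    (N : ℕ) (w : ℝ → ℝ → ℝ)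
    (hint2 : ∀ p q : Polynomial ℝ,
      Integrable (fun s : ℝ × ℝ => p.eval s.1 * q.eval s.2 * w s.2 s.1))
    (hint1 : ∀ t : ℝ, ∀ p : Polynomial ℝ,
      Integrable (fun s : ℝ => p.eval s * w s t) ∧
      Integrable (fun s : ℝ => p.eval s * w t s))
    (P Q : Fin N → Polynomial ℝ)
    (horth : ∀ i j : Fin N,
      (∫ s : ℝ × ℝ, (P i).eval s.1 * (Q j).eval s.2 * w s.2 s.1) =
        if i = j then (1 : ℝ) else 0)
    (k l : ℕ) (hk : k ≤ N) (hl : l ≤ N) (x : Fin k → ℝ) (y : Fin l → ℝ) :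
    corrFun N w P Q k l hk hl x y =
      Matrix.det (Matrix.fromBlocks
        (Matrix.of fun r s : Fin k => ∫ t : ℝ, Hker N P Q (x r) t * w t (x s))
        (Matrix.of fun (r : Fin k) (s : Fin l) => Hker N P Q (x r) (y s))
        (Matrix.of fun (r : Fin l) (s : Fin k) =>
          (∫ t : ℝ, ∫ t' : ℝ, w (y r) t * Hker N P Q t t' * w t' (x s)) - w (y r) (x s))
        (Matrix.of fun r s : Fin l => ∫ t : ℝ, w (y r) t * Hker N P Q t (y s))) := by
  have hk' : k + (N - k) = N := by omega
  have hl' : l + (N - l) = N := by omega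
  have hy : ∀ X : Fin N → ℝ, ∫ v, (kernelMatrix (kernel w P Q)
      (Sum.map X (Fin.appendCast hl' y v))).det =
        (N - l).factorial * (kernelMatrix (kernel w P Q) (Sum.map X y)).det := fun X =>
    integral_appendCast_eq_factorial_mul
      (fun _ Y => (kernelMatrix (kernel w P Q) (Sum.map X Y)).det)
      (fun h y => integrable_det_kernelMatrix_appendCast_right hint1 h X y)
      (fun _ _ y => integral_det_kernelMatrix_snoc_right hint2 hint1 horth X y) hl' y
  have hx : ∫ u, (kernelMatrix (kernel w P Q) (Sum.map (Fin.appendCast hk' x u) y)).det =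
      (N - k).factorial * (kernelMatrix (kernel w P Q) (Sum.map x y)).det :=
    integral_appendCast_eq_factorial_mul
      (fun _ X => (kernelMatrix (kernel w P Q) (Sum.map X y)).det)
      (fun h x => integrable_det_kernelMatrix_appendCast_left hint2 hint1 h x y)
      (fun _ _ x => integral_det_kernelMatrix_snoc_left hint2 hint1 horth x y) hk' x
  change _ * ∫ u, ∫ v, jointDensity N w P Q (Fin.appendCast hk' x u) (Fin.appendCast hl' y v) = _
  simp_rw [jointDensity_eq_det_kernelMatrix, integral_div, hy]
  rw [integral_const_mul, hx, fromBlocks_eq_kernelMatrix hint1]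
  field_simp

/-- **Proposition 3.1 (Eynard–Mehta).** The correlation functions of two coupled
random matrices are given by a determinantal formula with a 2×2 matrix kernel. -/
theorem eynard_mehta
    (N : ℕ) (hN : 1 ≤ N) (w : ℝ → ℝ → ℝ)
    (hwmeas : Measurable fun p : ℝ × ℝ => w p.1 p.2)
    (hint2 : ∀ p q : Polynomial ℝ,
      Integrable (fun s : ℝ × ℝ => p.eval s.1 * q.eval s.2 * w s.2 s.1))
    (hint1 : ∀ t : ℝ, ∀ p : Polynomial ℝ,
      Integrable (fun s : ℝ => p.eval s * w s t) ∧
      Integrable (fun s : ℝ => p.eval s * w t s))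
    (P Q : Fin N → Polynomial ℝ)
    (hdegP : ∀ i, (P i).degree = ((i : ℕ) : WithBot ℕ))
    (hdegQ : ∀ i, (Q i).degree = ((i : ℕ) : WithBot ℕ))
    (horth : ∀ i j : Fin N,
      (∫ s : ℝ × ℝ, (P i).eval s.1 * (Q j).eval s.2 * w s.2 s.1) =
        if i = j then (1 : ℝ) else 0)
    (k l : ℕ) (hk : k ≤ N) (hl : l ≤ N) (x : Fin k → ℝ) (y : Fin l → ℝ) :
    corrFun N w P Q k l hk hl x y =
      Matrix.det (Matrix.fromBlocks
        (Matrix.of fun r s : Fin k => ∫ t : ℝ, Hker N P Q (x r) t * w t (x s))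
        (Matrix.of fun (r : Fin k) (s : Fin l) => Hker N P Q (x r) (y s))
        (Matrix.of fun (r : Fin l) (s : Fin k) =>
          (∫ t : ℝ, ∫ t' : ℝ, w (y r) t * Hker N P Q t t' * w t' (x s)) - w (y r) (x s))
        (Matrix.of fun r s : Fin l => ∫ t : ℝ, w (y r) t * Hker N P Q t (y s))) :=
  eynard_mehta_general N w hint2 hint1 P Q horth k l hk hl x y
end

section
/- Expansion of a determinant along the first k rows and the first l columns: det M = Σ_{d = max(k,l)}^{min(k+l,N)} (1/d!) Σ_{(a,b)} ε(a,b) · (∏_{i=1}^d M_{a_i b_i}) · det M(â; b̂), where the inner sum is over all pairs of d-tuples a = (a₁,…,a_d) and b = (b₁,…,b_d) of pairwise distinct indices in {1,…,N} such that {1,…,k} ⊆ {a₁,…,a_d}, {1,…,l} ⊆ {b₁,…,b_d}, and for every i ∈ {1,…,d} either a_i ≤ k or b_i ≤ l. Here det M(â; b̂) denotes the determinant of the (N−d) × (N−d) submatrix of M obtained by deleting rows a₁,…,a_d and columns b₁,…,b_d (the remaining rows and columns taken in increasing order), and ε(a,b) = (−1)^{Σ_{i=1}^d a_i + Σ_{i=1}^d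 b_i} · sgn(α ∘ β^{−1}), where α, β are the unique permutations of {1,…,d} with a_{α(1)} < ⋯ < a_{α(d)} and b_{β(1)} < ⋯ < b_{β(d)}. -/
/-!
Write `det M = ∑_σ sgn σ ∏_x M (σ x) x` and sort the permutations by the set `colSet k l σ` of
columns `x` with `x < l` or `σ x < k`; its size `d` lies between `max k l` and `min (k + l) N`.
A permutation `σ` with `|colSet k l σ| = d`, together with one of the `d!` orderings `b` of that
set, is the same thing as an admissible pair `(a, b) = (σ ∘ b, b)` together with the permutation `τ`
that `σ` induces between the increasingly enumerated complements of `{b_i}` and `{a_i}`.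
Along this decomposition `∏_x M (σ x) x` splits as `∏_i M a_i b_i` times a term of the Leibniz
expansion of the minor `det M(â; b̂)`, and `sgn σ = ε(a, b) sgn τ`. The sign comes from the
permutation listing a `d`-set `s` first and its complement after it: its sign is
`(-1)^(∑ s + ∑_{i<d} i)`, because moving an element of `s` one step down is an adjacent
transposition, and it is the identity once `s = {0, …, d-1}`.
-/

namespace DetExpansion

open Finset Function Equiv

variable {N d : ℕ}

lemma le_of_card_eq {s : Finset (Fin N)} (hs : #s = d) : d ≤ N := by
  simpa [hs] using s.card_le_univ

lemma card_compl_of_card_eq {s : Finset (Fin N)} (hs : #s = d) : #sᶜ = N - d := by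
  rw [card_compl, Fintype.card_fin, hs]

def finSumFinEquivOfLE (hd : d ≤ N) : Fin d ⊕ Fin (N - d) ≃ Fin N :=
  finSumFinEquiv.trans (finCongr (Nat.add_sub_cancel' hd))

@[simp] lemma finSumFinEquivOfLE_inl (hd : d ≤ N) (i : Fin d) :
    (finSumFinEquivOfLE hd (.inl i) : ℕ) = i := rfl

@[simp] lemma finSumFinEquivOfLE_inr (hd : d ≤ N) (j : Fin (N - d)) :
    (finSumFinEquivOfLE hd (.inr j) : ℕ) = d + j := rfl

def shuffle (s : Finset (Fin N)) (hs : #s = d) : Perm (Fin N) :=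
  (finSumFinEquivOfLE (le_of_card_eq hs)).symm.trans
    (finSumEquivOfFinset hs (card_compl_of_card_eq hs))

lemma shuffle_apply (s : Finset (Fin N)) (hs : #s = d) (x : Sum (Fin d) (Fin (N - d))) :
    shuffle s hs (finSumFinEquivOfLE (le_of_card_eq hs) x) =
      finSumEquivOfFinset hs (card_compl_of_card_eq hs) x := by
  simp [shuffle]

lemma orderEmbOfFin_map {α β : Type*} [LinearOrder α] [LinearOrder β] {t : Finset α}
    {f : α ↪ β} (hf : StrictMonoOn f t) (ht : #t = d) (h : #(t.map f) = d) (i : Fin d) :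
    (t.map f).orderEmbOfFin h i = f (t.orderEmbOfFin ht i) := by
  refine congrFun (orderEmbOfFin_unique h (f := f ∘ t.orderEmbOfFin ht) (fun i => ?_) ?_).symm i
  · exact mem_map_of_mem _ (orderEmbOfFin_mem t ht i)
  · exact fun i j hij => hf (orderEmbOfFin_mem t ht i) (orderEmbOfFin_mem t ht j)
      ((t.orderEmbOfFin ht).strictMono hij)

lemma orderEmbOfFin_congr {α : Type*} [LinearOrder α] {s t : Finset α} (h : s = t)
    (hs : #s = d) (ht : #t = d) (i : Fin d) : s.orderEmbOfFin hs i = t.orderEmbOfFin ht i := by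
  subst h; rfl

lemma shuffle_map {s t : Finset (Fin N)} (hs : #s = d) (ht : #t = d) {π : Perm (Fin N)}
    (hst : t.map π.toEmbedding = s) (h₁ : StrictMonoOn π t) (h₂ : StrictMonoOn π ↑tᶜ) :
    shuffle s hs = π * shuffle t ht := by
  subst hst
  ext x
  obtain ⟨y, rfl⟩ := (finSumFinEquivOfLE (le_of_card_eq ht)).surjective x
  rw [Perm.mul_apply, shuffle_apply, shuffle_apply]
  cases y with
  | inl i => simpa using congrArg Fin.val (orderEmbOfFin_map h₁ ht hs i)
  | inr j =>
    simp only [finSumEquivOfFinset_inr]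
    rw [orderEmbOfFin_congr (by ext; simp : (t.map π.toEmbedding)ᶜ = tᶜ.map π.toEmbedding) _
      (by rw [card_map, card_compl_of_card_eq ht]),
      orderEmbOfFin_map h₂ (card_compl_of_card_eq ht)]
    rfl

lemma eq_map_castLE {s : Finset (Fin N)} (hs : #s = d) (h : ∀ x ∈ s, (x : ℕ) < d) :
    s = univ.map (Fin.castLEEmb (le_of_card_eq hs)) :=
  eq_of_subset_of_card_le (fun x hx => mem_map.2 ⟨⟨x, h x hx⟩, mem_univ _, rfl⟩) (by simp [hs])

lemma shuffle_eq_one {s : Finset (Fin N)} (hs : #s = d) (h : ∀ x ∈ s, (x : ℕ) < d) :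
    shuffle s hs = 1 := by
  have hd := le_of_card_eq hs
  have hs' := eq_map_castLE hs h
  ext x
  obtain ⟨y, rfl⟩ := (finSumFinEquivOfLE hd).surjective x
  rw [shuffle_apply, Perm.one_apply]
  cases y with
  | inl i =>
    have : Fin.castLE hd = s.orderEmbOfFin hs :=
      orderEmbOfFin_unique hs (fun i => by simp [hs']) (Fin.strictMono_castLE hd)
    simp [← this]
  | inr j =>
    have : (fun j : Fin (N - d) => (⟨d + j, by omega⟩ : Fin N)) =
        sᶜ.orderEmbOfFin (card_compl_of_card_eq hs) :=
      orderEmbOfFin_unique _ (fun j => by simpa using fun hj => (h _ hj).not_ge (by simp))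
        (fun i j hij => by simpa using hij)
    simp [← this]

lemma strictMonoOn_swap {a' a : Fin N} (h : (a' : ℕ) + 1 = a) {t : Set (Fin N)}
    (ht : ¬ (a' ∈ t ∧ a ∈ t)) : StrictMonoOn (swap a' a) t := by
  intro x hx y hy hxy
  have hxy' : ¬ (x = a' ∧ y = a) := fun ⟨h₁, h₂⟩ => ht ⟨h₁ ▸ hx, h₂ ▸ hy⟩
  simp only [swap_apply_def]
  rw [Fin.lt_def] at hxy ⊢
  simp only [Fin.ext_iff] at hxy' ⊢
  split_ifs <;> omega

lemma exists_adjacent_gap {s : Finset (Fin N)} (hs : #s = d) {x : Fin N} (hx : x ∈ s)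
    (hdx : d ≤ x) : ∃ a' ∉ s, ∃ a ∈ s, (a' : ℕ) + 1 = a := by
  have hgap : (Iic x \ s).Nonempty := by
    rw [sdiff_nonempty]
    intro hsub
    have := card_le_card hsub
    rw [Fin.card_Iic, hs] at this
    omega
  obtain ⟨hyx, hys⟩ := mem_sdiff.1 ((Iic x \ s).max'_mem hgap)
  set y := (Iic x \ s).max' hgap
  have hyx' : y < x := lt_of_le_of_ne (mem_Iic.1 hyx) (fun h => hys (by rwa [h]))
  refine ⟨y, hys, ⟨y + 1, by omega⟩, ?_, rfl⟩
  by_contra hc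
  have : (y : ℕ) + 1 ≤ y := Fin.le_def.1 <| (Iic x \ s).le_max' ⟨y + 1, by omega⟩
    (mem_sdiff.2 ⟨mem_Iic.2 (Fin.le_def.2 (by simp; omega)), hc⟩)
  omega

lemma sum_map_swap_add_one {s : Finset (Fin N)} {a' a : Fin N} (ha : a ∈ s) (ha' : a' ∉ s)
    (hadj : (a' : ℕ) + 1 = a) :
    ∑ x ∈ s.map (swap a' a).toEmbedding, (x : ℕ) + 1 = ∑ x ∈ s, (x : ℕ) := by
  have hfix : ∀ y ∈ s.erase a, swap a' a y = y := fun y hy =>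
    swap_apply_of_ne_of_ne (fun h => ha' (h ▸ mem_of_mem_erase hy)) (ne_of_mem_erase hy)
  rw [sum_map]
  simp only [toEmbedding_apply]
  rw [← add_sum_erase s (fun y => (y : ℕ)) ha, ← add_sum_erase s (fun y => (swap a' a y : ℕ)) ha,
    sum_congr rfl fun y hy => by rw [hfix y hy], swap_apply_right, ← hadj]
  ring

lemma sign_shuffle (s : Finset (Fin N)) (hs : #s = d) :
    Perm.sign (shuffle s hs) = (-1) ^ (∑ x ∈ s, (x : ℕ) + ∑ i ∈ range d, i) := by
  induction hm : ∑ x ∈ s, (x : ℕ) using Nat.strong_induction_on generalizing s with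
  | _ m ih =>
  by_cases h : ∀ x ∈ s, (x : ℕ) < d
  · have hsum : ∑ x ∈ s, (x : ℕ) = ∑ i ∈ range d, i := by
      rw [eq_map_castLE hs h, sum_map, ← Fin.sum_univ_eq_sum_range]
      rfl
    rw [shuffle_eq_one hs h, ← hm, hsum, map_one, ← two_mul, pow_mul, neg_one_sq, one_pow]
  push Not at h
  obtain ⟨x, hx, hdx⟩ := h
  obtain ⟨a', ha', a, ha, hadj⟩ := exists_adjacent_gap hs hx hdx
  set t := s.map (swap a' a).toEmbedding
  have hts : t.map (swap a' a).toEmbedding = s := by ext y; simp [t]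
  have ht : #t = d := by rw [card_map, hs]
  have hat : a' ∈ t ∧ a ∉ t := by simp [t, ha, ha']
  have hsum : ∑ x ∈ t, (x : ℕ) + 1 = m := hm ▸ sum_map_swap_add_one ha ha' hadj
  rw [shuffle_map hs ht hts (strictMonoOn_swap hadj (by simp [hat]))
      (strictMonoOn_swap hadj (by simp [hat])), map_mul, Perm.sign_swap, ih _ (by omega) t ht rfl,
    ← hsum]
  · rw [add_right_comm, pow_succ']
  · exact fun h => by rw [h] at hadj; omega

lemma orderEmbOfFin_image_eq_comp_sort {α : Type*} [LinearOrder α] {f : Fin d → α}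
    (hf : Injective f) (h : #(univ.image f) = d) :
    ⇑((univ.image f).orderEmbOfFin h) = f ∘ Tuple.sort f :=
  (orderEmbOfFin_unique h (fun _ => mem_image_of_mem _ (mem_univ _))
    ((Tuple.monotone_sort f).strictMono_of_injective (hf.comp (Tuple.sort f).injective))).symm

lemma card_image_univ {α : Type*} [DecidableEq α] {f : Fin d → α} (hf : Injective f) :
    #(univ.image f) = d := by
  rw [card_image_of_injective _ hf, card_univ, Fintype.card_fin]

lemma card_image_embedding (a : Fin d ↪ Fin N) : #(univ.image a) = d :=
  card_image_univ a.injective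

def complEmb (a : Fin d → Fin N) (ha : Injective a) : Fin (N - d) ↪o Fin N :=
  (univ \ univ.image a).orderEmbOfFin (card_compl_of_card_eq (card_image_univ ha))

def splitEquiv (a : Fin d ↪ Fin N) : Fin d ⊕ Fin (N - d) ≃ Fin N :=
  (sumCongr (Tuple.sort a).symm (Equiv.refl _)).trans
    (finSumEquivOfFinset (card_image_embedding a)
      (card_compl_of_card_eq (card_image_embedding a)))

@[simp] lemma splitEquiv_inl (a : Fin d ↪ Fin N) (i : Fin d) : splitEquiv a (.inl i) = a i := by
  simp [splitEquiv, orderEmbOfFin_image_eq_comp_sort a.injective]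

@[simp] lemma splitEquiv_inr (a : Fin d ↪ Fin N) (j : Fin (N - d)) :
    splitEquiv a (.inr j) = complEmb a a.injective j :=
  rfl

lemma splitEquiv_eq_shuffle_mul (a : Fin d ↪ Fin N) :
    (finSumFinEquivOfLE (le_of_card_eq (card_image_embedding a))).symm.trans (splitEquiv a) =
      shuffle _ (card_image_embedding a) *
        (finSumFinEquivOfLE (le_of_card_eq (card_image_embedding a))).permCongr
          (sumCongr (Tuple.sort a)⁻¹ 1) := by
  ext x
  simp [shuffle, splitEquiv, Perm.mul_apply, permCongr_apply]

lemma sign_splitEquiv (a : Fin d ↪ Fin N) :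
    Perm.sign ((finSumFinEquivOfLE (le_of_card_eq (card_image_embedding a))).symm.trans
      (splitEquiv a)) = (-1) ^ (∑ i, (a i : ℕ) + ∑ i ∈ range d, i) * Perm.sign (Tuple.sort a) := by
  rw [splitEquiv_eq_shuffle_mul, map_mul, sign_shuffle, Perm.sign_permCongr, Perm.sign_sumCongr,
    sum_image fun _ _ _ _ h => a.injective h]
  simp

def glue (a b : Fin d ↪ Fin N) (τ : Perm (Fin (N - d))) : Perm (Fin N) :=
  (splitEquiv b).symm.trans ((sumCongr (Equiv.refl _) τ).trans (splitEquiv a))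

lemma glue_apply_left (a b : Fin d ↪ Fin N) (τ : Perm (Fin (N - d))) (i : Fin d) :
    glue a b τ (b i) = a i := by
  rw [← splitEquiv_inl b, glue, trans_apply, symm_apply_apply]
  simp

lemma glue_apply_complEmb (a b : Fin d ↪ Fin N) (τ : Perm (Fin (N - d))) (j : Fin (N - d)) :
    glue a b τ (complEmb b b.injective j) = complEmb a a.injective (τ j) := by
  simp [glue, ← splitEquiv_inr]

lemma sign_glue (a b : Fin d ↪ Fin N) (τ : Perm (Fin (N - d))) :
    Perm.sign (glue a b τ) = (-1) ^ (∑ i, (a i : ℕ) + ∑ i, (b i : ℕ)) *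
      Perm.sign (Tuple.sort a * (Tuple.sort b)⁻¹) * Perm.sign τ := by
  set e := finSumFinEquivOfLE (le_of_card_eq (card_image_embedding a))
  have : glue a b τ = e.symm.trans (splitEquiv a) * e.permCongr (sumCongr 1 τ) *
      (e.symm.trans (splitEquiv b))⁻¹ := by
    ext x
    simp [glue, Perm.mul_apply, permCongr_apply]
  rw [this, map_mul, map_mul, Perm.sign_inv, sign_splitEquiv, sign_splitEquiv, Perm.sign_permCongr,
    Perm.sign_sumCongr, map_mul, Perm.sign_inv, map_one, one_mul, pow_add, pow_add, pow_add]
  -- the two factors `(-1) ^ ∑_{i<d} i` cancel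
  rcases Int.units_eq_one_or ((-1 : ℤˣ) ^ ∑ i ∈ range d, i) with h | h <;>
    simp only [h, mul_neg, neg_mul, neg_neg, mul_one] <;> ac_rfl

lemma glue_injective (a b : Fin d ↪ Fin N) : Injective (glue a b) := fun τ τ' h =>
  Perm.ext fun j => (complEmb a a.injective).injective <| by
    rw [← glue_apply_complEmb a b τ, ← glue_apply_complEmb a b τ', h]

lemma exists_glue_eq (σ : Perm (Fin N)) (b : Fin d ↪ Fin N) :
    ∃ τ, glue (b.trans σ.toEmbedding) b τ = σ := by
  set a := b.trans σ.toEmbedding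
  set p : Perm (Fin d ⊕ Fin (N - d)) := (splitEquiv b).trans (σ.trans (splitEquiv a).symm)
  have hp : ∀ i, p (.inl i) = .inl i := fun i => by
    simp [p, symm_apply_eq, a]
  obtain ⟨⟨_, τ⟩, hτ⟩ := Perm.mem_sumCongrHom_range_of_perm_mapsTo_inl (σ := p)
    (by rintro _ ⟨i, rfl⟩; exact ⟨i, (hp i).symm⟩)
  refine ⟨τ, Perm.ext fun x => ?_⟩
  obtain ⟨y | j, rfl⟩ := (splitEquiv b).surjective x
  · simp [glue_apply_left, a]
  · have h := DFunLike.congr_fun hτ (Sum.inr j)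
    simp only [Perm.sumCongrHom_apply, Perm.sumCongr_apply, Sum.map_inr, p, trans_apply,
      splitEquiv_inr] at h
    rw [splitEquiv_inr, glue_apply_complEmb, ← splitEquiv_inr, h, apply_symm_apply]

lemma prod_glue {R : Type*} [CommMonoid R] (f : Fin N → Fin N → R) (a b : Fin d ↪ Fin N)
    (τ : Perm (Fin (N - d))) :
    ∏ x, f (glue a b τ x) x =
      (∏ i, f (a i) (b i)) * ∏ j, f (complEmb a a.injective (τ j)) (complEmb b b.injective j) := by
  rw [← (splitEquiv b).prod_comp, Fintype.prod_sum_type]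
  simp only [splitEquiv_inl, glue_apply_left, splitEquiv_inr, glue_apply_complEmb]

lemma sort_strictMono_comp {α : Type*} [LinearOrder α] {e : Fin d → α} (he : StrictMono e)
    (g : Perm (Fin d)) : Tuple.sort (e ∘ g) = g⁻¹ := by
  have h := Tuple.comp_perm_comp_sort_eq_comp_sort (f := e) (σ := g)
  rw [Tuple.sort_eq_refl_iff_monotone.2 he.monotone] at h
  exact eq_inv_of_mul_eq_one_right <| Perm.ext fun i => he.injective (congrFun h i)

lemma eq_of_image_eq_of_sort_eq {α : Type*} [LinearOrder α] {f g : Fin d → α}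
    (hf : Injective f) (hg : Injective g) (himage : univ.image f = univ.image g)
    (hsort : Tuple.sort f = Tuple.sort g) : f = g := by
  funext i
  obtain ⟨j, rfl⟩ := (Tuple.sort f).surjective i
  have := congrFun (orderEmbOfFin_image_eq_comp_sort hf (card_image_univ hf)) j
  rw [orderEmbOfFin_congr himage _ (card_image_univ hg),
    orderEmbOfFin_image_eq_comp_sort hg, ← hsort] at this
  exact this.symm

def colSet (k l : ℕ) (σ : Perm (Fin N)) : Finset (Fin N) :=
  univ.filter fun x => (x : ℕ) < l ∨ (σ x : ℕ) < k

-- Reducible, so that `expansionTerm` below elaborates with the decidability instance of the theorem.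
abbrev IsAdmissible (k l : ℕ) (a b : Fin d → Fin N) : Prop :=
  (∀ i : Fin N, (i : ℕ) < k → ∃ j, a j = i) ∧ (∀ i : Fin N, (i : ℕ) < l → ∃ j, b j = i) ∧
    ∀ i, (a i : ℕ) < k ∨ (b i : ℕ) < l

lemma isAdmissible_comp_iff (k l : ℕ) (σ : Perm (Fin N)) (b : Fin d → Fin N) :
    IsAdmissible k l (σ ∘ b) b ↔ univ.image b = colSet k l σ := by
  constructor
  · rintro ⟨hk, hl, hkl⟩
    ext x
    simp only [mem_image, mem_univ, true_and, colSet, mem_filter]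
    refine ⟨?_, ?_⟩
    · rintro ⟨i, rfl⟩
      exact (hkl i).symm
    · rintro (hx | hx)
      · exact hl x hx
      · obtain ⟨i, hi⟩ := hk _ hx
        exact ⟨i, σ.injective hi⟩
  · intro h
    have hmem : ∀ x : Fin N, (x : ℕ) < l ∨ (σ x : ℕ) < k → ∃ i, b i = x := fun x hx => by
      simpa using (h ▸ (mem_filter.2 ⟨mem_univ x, hx⟩ : x ∈ colSet k l σ) : x ∈ univ.image b)
    refine ⟨fun x hx => ?_, fun x hx => hmem x (.inl hx), fun i => ?_⟩
    · obtain ⟨i, hi⟩ := hmem (σ⁻¹ x) (.inr (by simpa using hx))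
      exact ⟨i, by simp [hi]⟩
    · have : b i ∈ colSet k l σ := h ▸ mem_image_of_mem _ (mem_univ i)
      exact (mem_filter.1 this).2.symm

lemma card_colSet_mem_Icc {k l : ℕ} (hk : k ≤ N) (hl : l ≤ N) (σ : Perm (Fin N)) :
    #(colSet k l σ) ∈ Icc (max k l) (min (k + l) N) := by
  have hL : #(univ.filter fun x : Fin N => (x : ℕ) < l) = l := by
    rw [Fin.card_filter_val_lt, min_eq_right hl]
  have hK : #(univ.filter fun x : Fin N => (σ x : ℕ) < k) = k := by
    rw [card_equiv σ (t := univ.filter fun x : Fin N => (x : ℕ) < k) (by simp),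
      Fin.card_filter_val_lt, min_eq_right hk]
  have hsplit : colSet k l σ = (univ.filter fun x : Fin N => (x : ℕ) < l) ∪
      univ.filter fun x : Fin N => (σ x : ℕ) < k := filter_or _ _ _
  rw [mem_Icc, hsplit]
  refine ⟨max_le ?_ ?_, le_min ?_ ?_⟩
  · exact hK.ge.trans (card_le_card subset_union_right)
  · exact hL.ge.trans (card_le_card subset_union_left)
  · exact (card_union_le _ _).trans (by omega)
  · exact (card_le_univ _).trans (by simp)

lemma image_eq_colSet_glue {k l : ℕ} {a b : Fin d ↪ Fin N} (h : IsAdmissible k l a b)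
    (τ : Perm (Fin (N - d))) : univ.image b = colSet k l (glue a b τ) := by
  have ha : ⇑a = glue a b τ ∘ b := funext fun i => (glue_apply_left a b τ i).symm
  exact (isAdmissible_comp_iff k l _ b).1 (ha ▸ h)

lemma sum_glue_admissible {R : Type*} [AddCommMonoid R] (k l : ℕ) (F : Perm (Fin N) → R) :
    ∑ ab : (Fin d ↪ Fin N) × (Fin d ↪ Fin N),
        (if IsAdmissible k l ab.1 ab.2 then ∑ τ, F (glue ab.1 ab.2 τ) else 0) =
      d.factorial • ∑ σ ∈ univ.filter (fun σ : Perm (Fin N) => #(colSet k l σ) = d), F σ := by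
  have hrhs : d.factorial • ∑ σ ∈ univ.filter (fun σ : Perm (Fin N) => #(colSet k l σ) = d), F σ =
      ∑ q ∈ univ.filter (fun σ : Perm (Fin N) => #(colSet k l σ) = d) ×ˢ
        (univ : Finset (Perm (Fin d))), F q.1 := by
    rw [sum_product, smul_sum]
    simp [sum_const, Fintype.card_perm]
  rw [← sum_filter, ← sum_product', hrhs]
  refine sum_bij (fun p _ => (glue p.1.1 p.1.2 p.2, (Tuple.sort p.1.2)⁻¹)) ?_ ?_ ?_ fun _ _ => rfl
  · rintro ⟨⟨a, b⟩, τ⟩ h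
    simp only [mem_product, mem_filter, mem_univ, true_and, and_true] at h ⊢
    rw [← image_eq_colSet_glue h, card_image_embedding]
  · rintro ⟨⟨a, b⟩, τ⟩ h ⟨⟨a', b'⟩, τ'⟩ h' heq
    simp only [mem_product, mem_filter, mem_univ, true_and, and_true] at h h'
    simp only [Prod.mk.injEq, inv_inj] at heq
    obtain ⟨hσ, hsort⟩ := heq
    obtain rfl : b = b' := DFunLike.ext' <| eq_of_image_eq_of_sort_eq b.injective b'.injective
      (by rw [image_eq_colSet_glue h τ, image_eq_colSet_glue h' τ', hσ]) hsort
    obtain rfl : a = a' := DFunLike.ext' <| funext fun i => by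
      rw [← glue_apply_left a b τ, hσ, glue_apply_left]
    rw [glue_injective a b hσ]
  · rintro ⟨σ, g⟩ hq
    simp only [mem_product, mem_filter, mem_univ, true_and, and_true] at hq
    set e := (colSet k l σ).orderEmbOfFin hq
    set b : Fin d ↪ Fin N := g.toEmbedding.trans e.toEmbedding
    obtain ⟨τ, hτ⟩ := exists_glue_eq σ b
    refine ⟨((b.trans σ.toEmbedding, b), τ), ?_, ?_⟩
    · simp only [mem_product, mem_filter, mem_univ, true_and, and_true]
      refine (isAdmissible_comp_iff k l σ b).2 ?_
      rw [show ⇑b = e ∘ g from rfl, ← image_image, image_univ_equiv, image_orderEmbOfFin_univ]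
    · exact Prod.ext hτ <| by
        rw [show ⇑b = e ∘ g from rfl, sort_strictMono_comp e.strictMono, inv_inv]

/-- The summand `ε(a, b) (∏ M_{a_i b_i}) det M(â; b̂)` of the theorem, with 0-based indices: the
paper's `a_i` is `(a i : ℕ) + 1`, and `a_i ≤ k` becomes `(a i : ℕ) < k`. -/
noncomputable def expansionTerm {R : Type*} [CommRing R] (M : Matrix (Fin N) (Fin N) R)
    (k l : ℕ) (a b : Fin d → Fin N) : R :=
  if h : Injective a ∧ Injective b ∧ IsAdmissible k l a b then
    (-1 : R) ^ ((∑ i, ((a i : ℕ) + 1)) + ∑ i, ((b i : ℕ) + 1)) *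
      ((Perm.sign (Tuple.sort a * (Tuple.sort b)⁻¹) : ℤ) : R) * (∏ i, M (a i) (b i)) *
      (M.submatrix (complEmb a h.1) (complEmb b h.2.1)).det
  else 0

lemma expansionTerm_embedding {R : Type*} [CommRing R] (M : Matrix (Fin N) (Fin N) R)
    (k l : ℕ) (a b : Fin d ↪ Fin N) :
    expansionTerm M k l a b = if IsAdmissible k l a b then
      ∑ τ, ((Perm.sign (glue a b τ) : ℤ) : R) * ∏ x, M (glue a b τ x) x else 0 := by
  unfold expansionTerm
  by_cases h : IsAdmissible k l a b
  · rw [dif_pos ⟨a.injective, b.injective, h⟩, if_pos h, Matrix.det_apply', mul_sum]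
    refine sum_congr rfl fun τ _ => ?_
    rw [sign_glue, prod_glue M]
    simp only [sum_add_distrib, sum_const, card_univ, Fintype.card_fin, smul_eq_mul, mul_one,
      Matrix.submatrix_apply]
    rw [show ∑ i, (a i : ℕ) + d + (∑ i, (b i : ℕ) + d) = ∑ i, (a i : ℕ) + ∑ i, (b i : ℕ) + 2 * d by
      ring, pow_add _ _ (2 * d), pow_mul, neg_one_sq, one_pow, mul_one]
    push_cast
    ring
  · rw [dif_neg fun h' => h h'.2.2, if_neg h]

lemma sum_expansionTerm {R : Type*} [CommRing R] (M : Matrix (Fin N) (Fin N) R) (k l d : ℕ) :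
    ∑ ab : (Fin d → Fin N) × (Fin d → Fin N), expansionTerm M k l ab.1 ab.2 =
      d.factorial * ∑ σ ∈ univ.filter (fun σ : Perm (Fin N) => #(colSet k l σ) = d),
        ((Perm.sign σ : ℤ) : R) * ∏ i, M (σ i) i := by
  rw [← nsmul_eq_mul, ← sum_glue_admissible]
  refine (Fintype.sum_of_injective (Prod.map (⇑) (⇑)) ?_ _ _ ?_ fun ab => ?_).symm
  · exact fun p q h => Prod.ext (DFunLike.coe_injective congr($h.1))
      (DFunLike.coe_injective congr($h.2))
  · rintro ⟨a, b⟩ hab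
    refine dif_neg ?_
    rintro ⟨ha, hb, -⟩
    exact hab ⟨(⟨a, ha⟩, ⟨b, hb⟩), rfl⟩
  · exact (expansionTerm_embedding M k l ab.1 ab.2).symm

end DetExpansion

/-- **Lemma 3.3.** Expansion of a determinant along the first `k` rows and the first
`l` columns:
`det M = Σ_{d=max(k,l)}^{min(k+l,N)} (1/d!) Σ_{(a,b)} ε(a,b) (∏ M_{a_i b_i}) det M(â;b̂)`,
where the inner sum is over pairs of `d`-tuples `a, b` of pairwise distinct indices
such that `{1,…,k} ⊆ {a_i}`, `{1,…,l} ⊆ {b_i}`, and for each `i` either `a_i ≤ k` or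
`b_i ≤ l`; `M(â;b̂)` is the submatrix with rows `a` and columns `b` deleted (remaining
rows and columns in increasing order), and
`ε(a,b) = (−1)^{Σ a_i + Σ b_i} · sgn(α ∘ β⁻¹)` with `α, β` the sorting permutations of
`a, b`. (Indices in the paper are 1-based; here `Fin N` is 0-based, so `a_i` 1-based
corresponds to `(a i : ℕ) + 1`, and `a_i ≤ k` to `(a i : ℕ) < k`.) -/
theorem det_expansion_rows_cols
    (N : ℕ) (M : Matrix (Fin N) (Fin N) ℂ)
    (k l : ℕ) (hk : k ≤ N) (hl : l ≤ N) :
    M.det =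
      ∑ d ∈ Finset.Icc (max k l) (min (k + l) N),
        ((d.factorial : ℂ))⁻¹ *
          ∑ ab : (Fin d → Fin N) × (Fin d → Fin N),
            if h : Function.Injective ab.1 ∧ Function.Injective ab.2 ∧
                (∀ i : Fin N, (i : ℕ) < k → ∃ j, ab.1 j = i) ∧
                (∀ i : Fin N, (i : ℕ) < l → ∃ j, ab.2 j = i) ∧
                (∀ i : Fin d, (ab.1 i : ℕ) < k ∨ (ab.2 i : ℕ) < l) then
              (-1 : ℂ) ^ ((∑ i, ((ab.1 i : ℕ) + 1)) + ∑ i, ((ab.2 i : ℕ) + 1)) *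
              ((Equiv.Perm.sign (Tuple.sort ab.1 * (Tuple.sort ab.2)⁻¹) : ℤ) : ℂ) *
              (∏ i, M (ab.1 i) (ab.2 i)) *
              Matrix.det (M.submatrix
                (fun i : Fin (N - d) =>
                  (Finset.univ \ Finset.image ab.1 Finset.univ).orderEmbOfFin
                    (show (Finset.univ \ Finset.image ab.1 Finset.univ).card = N - d by
                      rw [Finset.card_sdiff_of_subset (Finset.subset_univ _), Finset.card_univ,
                        Fintype.card_fin,
                        Finset.card_image_of_injective _ h.1, Finset.card_univ,
                        Fintype.card_fin]) i)
                (fun i : Fin (N - d) =>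
                  (Finset.univ \ Finset.image ab.2 Finset.univ).orderEmbOfFin
                    (show (Finset.univ \ Finset.image ab.2 Finset.univ).card = N - d by
                      rw [Finset.card_sdiff_of_subset (Finset.subset_univ _), Finset.card_univ,
                        Fintype.card_fin,
                        Finset.card_image_of_injective _ h.2.1, Finset.card_univ,
                        Fintype.card_fin]) i))
            else 0 := by
  rw [Matrix.det_apply', ← Finset.sum_fiberwise_of_maps_to fun σ _ =>
    DetExpansion.card_colSet_mem_Icc hk hl σ]
  refine Finset.sum_congr rfl fun d _ => ?_
  exact (eq_inv_mul_iff_mul_eq₀ (Nat.cast_ne_zero.2 d.factorial_ne_zero)).2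
    (DetExpansion.sum_expansionTerm M k l d).symm
end

section
/- Integrating out eigenvalues against biorthogonal polynomials: for every integer d with 0 ≤ d ≤ N and all real numbers x₁,…,x_d, y₁,…,y_d, ∫_{ℝ^{N−d}} ∫_{ℝ^{N−d}} det[w(y_i,x_j)]_{i,j=d+1}^{N} · det[P_{i−1}(x_j)]_{i,j=1}^{N} · det[Q_{i−1}(y_j)]_{i,j=1}^{N} dx_{d+1}⋯dx_N dy_{d+1}⋯dy_N = ((N−d)!)² · det[H(x_i,y_j)]_{i,j=1}^{d} (for d = N the integral is vacuous and the claim reads det[P_{i−1}(x_j)] · det[Q_{i−1}(y_j)] = det[H(x_i,y_j)]; for d = 0 the right-hand side is (N!)²). -/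
open MeasureTheory Polynomial

/-!
Expand the three determinants over permutations `σ` of the integrated indices and `τ, ρ` of all
`N` indices. Each term is a product of one-variable factors, so the integrals over `u` and `v`
split into pairings `∫∫ P_k(s) Q_l(t) w(t, s)`, and biorthogonality kills every term except those
with `τ (σ i) = ρ i` for all integrated indices `i`. For fixed `σ, τ` the surviving `ρ` are
`τ ∘ (α ⊕ σ)` with `α ∈ S_d`, so the `σ`-sum gives one factor `(N - d)!`. What is left depends on
`τ` only through its restriction to the fixed indices, an injection of `d` indices into `N`; each
injection extends to `(N - d)!` permutations, and summing over all maps of `d` indices into `N` is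
the row-multilinear expansion of `det (Pᵀ Q) = det [H(x_i, y_j)]`, in which non-injective maps
contribute determinants with two equal rows.
-/

open Equiv Finset Matrix

namespace Equiv.Perm

theorem exists_sumCongr_eq_of_apply_inl {m n : Type*} [Finite m] [Finite n]
    {μ : Perm (m ⊕ n)} {α : Perm m} (h : ∀ j, μ (.inl j) = .inl (α j)) :
    ∃ β, sumCongr α β = μ := by
  obtain ⟨⟨α', β⟩, hμ⟩ := mem_sumCongrHom_range_of_perm_mapsTo_inl (σ := μ)
    (by rintro _ ⟨j, rfl⟩; exact ⟨α j, (h j).symm⟩)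
  obtain rfl : α' = α := by
    ext j
    simpa [← hμ] using h j
  exact ⟨β, hμ⟩

theorem exists_sumCongr_eq_of_apply_inr {m n : Type*} [Finite m] [Finite n]
    {μ : Perm (m ⊕ n)} {β : Perm n} (h : ∀ i, μ (.inr i) = .inr (β i)) :
    ∃ α, sumCongr α β = μ := by
  obtain ⟨⟨α, β'⟩, hμ⟩ := mem_sumCongrHom_range_of_perm_mapsTo_inl (σ := μ)
    ((perm_mapsTo_inl_iff_mapsTo_inr μ).2 (by rintro _ ⟨i, rfl⟩; exact ⟨β i, (h i).symm⟩))
  obtain rfl : β' = β := by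
    ext i
    simpa [← hμ] using h i
  exact ⟨α, hμ⟩

theorem prod_apply_comp_eq {M α n : Type*} [CommMonoid M] [Fintype n]
    (f : n → α → M) (σ : Perm n) (u : n → α) :
    ∏ i, f i (u (σ i)) = ∏ i, f (σ.symm i) (u i) := by
  rw [← Equiv.prod_comp σ fun i => f (σ.symm i) (u i)]
  simp

variable {R : Type*} [CommRing R] {m n : Type*} [Fintype m] [Fintype n]
  [DecidableEq m] [DecidableEq n]

theorem sum_ite_apply_inr_eq_sum_sumCongr (τ : Perm (m ⊕ n)) (β : Perm n)
    (G : Perm (m ⊕ n) → R) :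
    ∑ ρ, (if ∀ i, τ (.inr (β i)) = ρ (.inr i) then G ρ else 0) =
      ∑ α, G (τ * sumCongr α β) := by
  rw [← sum_filter]
  refine (sum_nbij (fun α => τ * sumCongr α β) (fun α _ => by simp) ?_ ?_ fun _ _ => rfl).symm
  · intro α _ α' _ h
    exact congr_arg Prod.fst (sumCongrHom_injective (a₁ := (α, β)) (a₂ := (α', β))
      (mul_left_cancel h))
  · intro ρ hρ
    simp only [coe_filter, mem_univ, true_and] at hρ
    obtain ⟨α, hα⟩ := exists_sumCongr_eq_of_apply_inr (μ := τ⁻¹ * ρ) (β := β)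
      fun i => by simp [← hρ i]
    exact ⟨α, by simp, by simp [hα]⟩

theorem card_filter_comp_inl_eq {f : m → m ⊕ n} (hf : Function.Injective f) :
    #{τ : Perm (m ⊕ n) | ⇑τ ∘ Sum.inl = f} = (Fintype.card n).factorial := by
  obtain ⟨τ, hτ⟩ := exists_extending_pair Sum.inl f Sum.inl_injective hf
  rw [← Fintype.card_perm, ← card_univ]
  refine (card_nbij (fun β => τ * sumCongr 1 β) (fun β _ => ?_) ?_ ?_).symm
  · refine mem_filter.2 ⟨mem_univ _, ?_⟩
    ext j
    simp [hτ]
  · intro β _ β' _ h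
    exact congr_arg Prod.snd (sumCongrHom_injective (a₁ := (1, β)) (a₂ := (1, β'))
      (mul_left_cancel h))
  · intro ρ hρ
    simp only [coe_filter, mem_univ, true_and] at hρ
    obtain ⟨β, hβ⟩ := exists_sumCongr_eq_of_apply_inl (μ := τ⁻¹ * ρ) (α := 1) fun j => by
      rw [mul_apply, one_apply, inv_eq_iff_eq, hτ]
      exact congr_fun hρ j
    exact ⟨β, by simp, by simp [hβ]⟩

theorem sum_comp_inl_eq (G : (m → m ⊕ n) → R) (hG : ∀ f, ¬ Function.Injective f → G f = 0) :
    ∑ τ : Perm (m ⊕ n), G (⇑τ ∘ Sum.inl) = (Fintype.card n).factorial * ∑ f, G f := by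
  rw [← sum_fiberwise univ fun τ : Perm (m ⊕ n) => ⇑τ ∘ Sum.inl, mul_sum]
  refine sum_congr rfl fun f _ => ?_
  rw [sum_congr rfl fun τ hτ => by rw [(mem_filter.1 hτ).2], sum_const, nsmul_eq_mul]
  by_cases hf : Function.Injective f
  · rw [card_filter_comp_inl_eq hf]
  · simp [hG f hf]

end Equiv.Perm

namespace Matrix

variable {R : Type*} [CommRing R]

theorem det_of_apply_apply {α β n : Type*} [Fintype n] [DecidableEq n]
    (g : α → β → R) (v : n → α) (u : n → β) :
    det (of fun i j => g (v i) (u j)) =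
      ∑ σ : Perm n, (Perm.sign σ : R) * ∏ i, g (v i) (u (σ i)) := by
  rw [← det_transpose, det_apply']
  rfl

theorem det_of_sumElim {α m n : Type*} [Fintype m] [Fintype n] [DecidableEq m] [DecidableEq n]
    (f : m ⊕ n → α → R) (x : m → α) (u : n → α) :
    det (of fun k c => f k (Sum.elim x u c)) =
      ∑ τ : Perm (m ⊕ n), (Perm.sign τ : R) *
        ((∏ j, f (τ (.inl j)) (x j)) * ∏ i, f (τ (.inr i)) (u i)) := by
  rw [det_apply']
  refine sum_congr rfl fun τ _ => ?_
  rw [Fintype.prod_sum_type]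
  rfl

theorem det_of_append_cast {α : Type*} {N d k : ℕ} (h : N = d + k)
    (f : Fin N → α → R) (x : Fin d → α) (u : Fin k → α) :
    det (of fun i j : Fin N => f i (Fin.append x u (Fin.cast h j))) =
      det (of fun a c => f (finSumFinEquiv.trans (finCongr h.symm) a) (Sum.elim x u c)) := by
  rw [← det_submatrix_equiv_self (finSumFinEquiv.trans (finCongr h.symm))]
  congr 1
  ext a (j | i) <;> simp

theorem det_transpose_mul_eq_sum {m κ : Type*} [Fintype m] [Fintype κ] [DecidableEq m]
    (A B : Matrix κ m R) :
    det (Aᵀ * B) = ∑ f : m → κ, (∏ i, A (f i) i) * det (B.submatrix f id) := by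
  have hrows : Aᵀ * B = fun i => ∑ k, A k i • B k := by
    ext i j
    simp [mul_apply]
  change detRowAlternating _ = _
  rw [hrows]
  refine ((detRowAlternating (n := m) (R := R)).map_sum fun i k => A k i • B k).trans
    (sum_congr rfl fun f _ => ?_)
  rw [MultilinearMap.map_smul_univ, smul_eq_mul]
  rfl

theorem sum_perms_agreeing_on_inr_eq_factorial_sq_mul_det {m n : Type*} [Fintype m] [Fintype n]
    [DecidableEq m] [DecidableEq n] (A B : Matrix (m ⊕ n) m R) :
    ∑ σ : Perm n, ∑ τ : Perm (m ⊕ n), ∑ ρ : Perm (m ⊕ n),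
      (Perm.sign σ : R) * Perm.sign τ * Perm.sign ρ * (∏ j, A (τ (.inl j)) j) *
        (∏ j, B (ρ (.inl j)) j) * (if ∀ i, τ (.inr (σ i)) = ρ (.inr i) then 1 else 0) =
      ((Fintype.card n).factorial : R) ^ 2 * det (Aᵀ * B) := by
  set G : (m → m ⊕ n) → R := fun f => (∏ j, A (f j) j) * det (B.submatrix f id)
  have hG : ∀ f, ¬ Function.Injective f → G f = 0 := fun f hf => by
    obtain ⟨i, j, hij, hne⟩ := Function.not_injective_iff.1 hf
    have hrows : B.submatrix f id i = B.submatrix f id j := funext fun k => by simp [hij]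
    simp only [G, det_zero_of_row_eq hne hrows, mul_zero]
  have hsign : ∀ (σ : Perm n) (τ : Perm (m ⊕ n)) (α : Perm m),
      (Perm.sign σ * Perm.sign τ * Perm.sign (τ * Perm.sumCongr α σ) : ℤˣ) = Perm.sign α := by
    intro σ τ α
    simp [Perm.sign_mul, Perm.sign_sumCongr, mul_left_comm, mul_comm, Int.units_mul_self]
  calc _ = ∑ _σ : Perm n, ∑ τ : Perm (m ⊕ n), G (τ ∘ .inl) := by
        refine sum_congr rfl fun σ _ => sum_congr rfl fun τ _ => ?_
        simp only [mul_ite, mul_one, mul_zero]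
        rw [Perm.sum_ite_apply_inr_eq_sum_sumCongr]
        dsimp only [G]
        rw [det_apply', mul_sum]
        refine sum_congr rfl fun α _ => ?_
        rw [← hsign σ τ α]
        simp only [Units.val_mul, Int.cast_mul, Perm.coe_mul, Function.comp_apply,
          Perm.sumCongr_apply, Sum.map_inl, submatrix_apply, id_eq]
        ring
    _ = _ := by
      rw [sum_const, card_univ, Fintype.card_perm, nsmul_eq_mul, Perm.sum_comp_inl_eq G hG,
        det_transpose_mul_eq_sum]
      ring

end Matrix

theorem MeasureTheory.integral_integral_sum_mul {ι α β : Type*} [Fintype ι] [MeasureSpace α]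
    [MeasureSpace β] (c : ι → ℝ) (K : ι → α → β → ℝ) (hK : ∀ i a, Integrable (K i a))
    (hK' : ∀ i, Integrable fun a => ∫ b, K i a b) :
    ∫ a, ∫ b, ∑ i, c i * K i a b = ∑ i, c i * ∫ a, ∫ b, K i a b := by
  simp_rw [integral_finsetSum _ fun i _ => (hK i _).const_mul (c i), integral_const_mul]
  rw [integral_finsetSum _ fun i _ => (hK' i).const_mul (c i)]
  simp_rw [integral_const_mul]

section Kernel

variable {E : Type*} [MeasureSpace E] [SigmaFinite (volume : Measure E)] {n : Type*} [Fintype n]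

theorem integrable_fintype_prod_comp_perm {f : n → E → ℝ} (hf : ∀ i, Integrable (f i))
    (σ : Perm n) : Integrable fun u : n → E => ∏ i, f i (u (σ i)) := by
  simp_rw [Perm.prod_apply_comp_eq f σ]
  exact Integrable.fintype_prod fun i => hf (σ.symm i)

theorem integral_fintype_prod_comp_perm (f : n → E → ℝ) (σ : Perm n) :
    ∫ u : n → E, ∏ i, f i (u (σ i)) = ∏ i, ∫ t, f i t := by
  simp_rw [Perm.prod_apply_comp_eq f σ]
  rw [integral_fintype_prod_volume_eq_prod, ← Equiv.prod_comp σ]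
  simp

theorem integrable_mul_integral {φ ψ : E → ℝ} {w : E → E → ℝ}
    (h : Integrable fun z : E × E => φ z.1 * ψ z.2 * w z.2 z.1) :
    Integrable fun t => φ t * ∫ s, ψ s * w s t := by
  simp_rw [← integral_const_mul]
  simpa only [mul_assoc] using h.integral_prod_left

theorem integral_mul_integral_eq_integral_prod {φ ψ : E → ℝ} {w : E → E → ℝ}
    (h : Integrable fun z : E × E => φ z.1 * ψ z.2 * w z.2 z.1) :
    ∫ t, φ t * ∫ s, ψ s * w s t = ∫ z : E × E, φ z.1 * ψ z.2 * w z.2 z.1 := by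
  simp_rw [← integral_const_mul, ← mul_assoc]
  exact (integral_prod _ h).symm

variable (w : E → E → ℝ) (φ ψ : n → E → ℝ) (σ : Perm n)

theorem integral_prod_mul_prod_kernel (u : n → E) :
    ∫ v : n → E, (∏ i, φ i (u i)) * ∏ i, ψ i (v i) * w (v i) (u (σ i)) =
      ∏ i, φ (σ i) (u (σ i)) * ∫ s, ψ i s * w s (u (σ i)) := by
  rw [integral_const_mul, integral_fintype_prod_volume_eq_prod (fun i s => ψ i s * w s (u (σ i))),
    ← Equiv.prod_comp σ fun i => φ i (u i), ← prod_mul_distrib]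

theorem integrable_prod_mul_prod_kernel (hψ : ∀ i t, Integrable fun s => ψ i s * w s t)
    (u : n → E) :
    Integrable fun v : n → E => (∏ i, φ i (u i)) * ∏ i, ψ i (v i) * w (v i) (u (σ i)) :=
  (Integrable.fintype_prod fun i => hψ i (u (σ i))).const_mul _

variable {w φ ψ σ}

theorem integrable_integral_prod_mul_prod_kernel
    (hφψ : ∀ i, Integrable fun z : E × E => φ (σ i) z.1 * ψ i z.2 * w z.2 z.1) :
    Integrable fun u : n → E =>
      ∫ v : n → E, (∏ i, φ i (u i)) * ∏ i, ψ i (v i) * w (v i) (u (σ i)) := by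
  simp_rw [integral_prod_mul_prod_kernel]
  exact integrable_fintype_prod_comp_perm (fun i => integrable_mul_integral (hφψ i)) σ

theorem integral_integral_prod_mul_prod_kernel
    (hφψ : ∀ i, Integrable fun z : E × E => φ (σ i) z.1 * ψ i z.2 * w z.2 z.1) :
    ∫ u : n → E, ∫ v : n → E, (∏ i, φ i (u i)) * ∏ i, ψ i (v i) * w (v i) (u (σ i)) =
      ∏ i, ∫ z : E × E, φ (σ i) z.1 * ψ i z.2 * w z.2 z.1 := by
  simp_rw [integral_prod_mul_prod_kernel,
    integral_fintype_prod_comp_perm (fun i t => φ (σ i) t * ∫ s, ψ i s * w s t),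
    integral_mul_integral_eq_integral_prod (hφψ _)]

end Kernel

theorem integral_integral_det_mul_det_mul_det {m n : Type*} [Fintype m] [Fintype n]
    [DecidableEq m] [DecidableEq n] (w : ℝ → ℝ → ℝ) (p q : m ⊕ n → ℝ → ℝ)
    (hq : ∀ k t, Integrable fun s => q k s * w s t)
    (hpq : ∀ k l, Integrable fun z : ℝ × ℝ => p k z.1 * q l z.2 * w z.2 z.1) (x y : m → ℝ) :
    ∫ u : n → ℝ, ∫ v : n → ℝ, det (of fun i j => w (v i) (u j)) *
        det (of fun k c => p k (Sum.elim x u c)) * det (of fun k c => q k (Sum.elim y v c)) =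
      ∑ σ : Perm n, ∑ τ : Perm (m ⊕ n), ∑ ρ : Perm (m ⊕ n),
        (Perm.sign σ : ℝ) * Perm.sign τ * Perm.sign ρ * (∏ j, p (τ (.inl j)) (x j)) *
          (∏ j, q (ρ (.inl j)) (y j)) *
          ∏ i, ∫ z : ℝ × ℝ, p (τ (.inr (σ i))) z.1 * q (ρ (.inr i)) z.2 * w z.2 z.1 := by
  set c : Perm n × Perm (m ⊕ n) × Perm (m ⊕ n) → ℝ := fun t =>
    (Perm.sign t.1 : ℝ) * Perm.sign t.2.1 * Perm.sign t.2.2 *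
      (∏ j, p (t.2.1 (.inl j)) (x j)) * (∏ j, q (t.2.2 (.inl j)) (y j))
  set K : Perm n × Perm (m ⊕ n) × Perm (m ⊕ n) → (n → ℝ) → (n → ℝ) → ℝ := fun t u v =>
    (∏ i, p (t.2.1 (.inr i)) (u i)) * ∏ i, q (t.2.2 (.inr i)) (v i) * w (v i) (u (t.1 i))
  have hexpand : ∀ u v, det (of fun i j => w (v i) (u j)) *
      det (of fun k c => p k (Sum.elim x u c)) * det (of fun k c => q k (Sum.elim y v c)) =
      ∑ t, c t * K t u v := by
    intro u v
    rw [det_of_sumElim, det_of_sumElim, det_of_apply_apply, sum_mul_sum]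
    simp only [sum_mul]
    simp only [mul_sum, Fintype.sum_prod_type]
    refine sum_congr rfl fun σ _ => sum_congr rfl fun τ _ => sum_congr rfl fun ρ _ => ?_
    dsimp only [c, K]
    rw [prod_mul_distrib]
    ring
  simp_rw [hexpand]
  rw [integral_integral_sum_mul c K
    (fun t => integrable_prod_mul_prod_kernel w _ _ t.1 fun i => hq _)
    (fun t => integrable_integral_prod_mul_prod_kernel fun i => hpq _ _)]
  simp only [Fintype.sum_prod_type]
  refine sum_congr rfl fun σ _ => sum_congr rfl fun τ _ => sum_congr rfl fun ρ _ => ?_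
  rw [integral_integral_prod_mul_prod_kernel (φ := fun i => p (τ (.inr i)))
    (ψ := fun i => q (ρ (.inr i))) fun i => hpq _ _]

/-- Integrating out eigenvalues against biorthogonal polynomials: for `0 ≤ d ≤ N`,
`∫∫ det[w(y_i,x_j)]_{i,j=d+1}^N · det[P_{i−1}(x_j)]_{i,j=1}^N · det[Q_{i−1}(y_j)]_{i,j=1}^N
  dx_{d+1}⋯dx_N dy_{d+1}⋯dy_N = ((N−d)!)² · det[H(x_i,y_j)]_{i,j=1}^d`,
where `x_{d+1},…,x_N` (resp. `y_{d+1},…,y_N`) are the integration variables `u`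
(resp. `v`), appended to the fixed variables `x₁,…,x_d` (resp. `y₁,…,y_d`). -/
theorem integrate_out_biorthogonal
    (N : ℕ) (w : ℝ → ℝ → ℝ)
    (hint2 : ∀ p q : Polynomial ℝ,
      Integrable (fun s : ℝ × ℝ => p.eval s.1 * q.eval s.2 * w s.2 s.1))
    (hint1 : ∀ t : ℝ, ∀ p : Polynomial ℝ,
      Integrable (fun s : ℝ => p.eval s * w s t) ∧
      Integrable (fun s : ℝ => p.eval s * w t s))
    (P Q : Fin N → Polynomial ℝ)
    (horth : ∀ i j : Fin N,
      (∫ s : ℝ × ℝ, (P i).eval s.1 * (Q j).eval s.2 * w s.2 s.1) =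
        if i = j then (1 : ℝ) else 0)
    (d : ℕ) (hd : d ≤ N) (x y : Fin d → ℝ) :
    (∫ u : Fin (N - d) → ℝ, ∫ v : Fin (N - d) → ℝ,
        Matrix.det (Matrix.of fun i j : Fin (N - d) => w (v i) (u j)) *
        Matrix.det (Matrix.of fun i j : Fin N =>
          (P i).eval (Fin.append x u (Fin.cast (by omega) j))) *
        Matrix.det (Matrix.of fun i j : Fin N =>
          (Q i).eval (Fin.append y v (Fin.cast (by omega) j)))) =
      ((N - d).factorial : ℝ) ^ 2 *
        Matrix.det (Matrix.of fun i j : Fin d => Hker N P Q (x i) (y j)) := by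
  have h : N = d + (N - d) := by omega
  set e : Fin d ⊕ Fin (N - d) ≃ Fin N := finSumFinEquiv.trans (finCongr h.symm)
  simp only [det_of_append_cast h fun i t => (P i).eval t,
    det_of_append_cast h fun i t => (Q i).eval t]
  rw [integral_integral_det_mul_det_mul_det w (fun k => (P (e k)).eval) (fun k => (Q (e k)).eval)
    (fun k t => (hint1 t _).1) (fun k l => hint2 _ _)]
  simp only [horth, e.injective.eq_iff, Fintype.prod_boole]
  have hcomb := sum_perms_agreeing_on_inr_eq_factorial_sq_mul_det
    (of fun k j => (P (e k)).eval (x j)) (of fun k j => (Q (e k)).eval (y j))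
  simp only [of_apply, Fintype.card_fin] at hcomb
  rw [hcomb]
  congr 2
  ext i j
  simp only [Hker, mul_apply, transpose_apply, of_apply]
  exact e.sum_comp fun k => (P k).eval (x i) * (Q k).eval (y j)
end

section
/- Let z, z′ ∈ ℂ with z ≠ 0 and z′ ∉ ℤ, and set t = zz′. Define G(τ₁,τ₂) = φ_{z′}(τ₁) · φ_{−z′}(τ₂) · (1/z) · ( (1+τ₂)^z (1+τ₁)^{−z} − 1 ) / (τ₂ − τ₁) for τ₁, τ₂ > 0 with τ₁ ≠ τ₂. Then at every such point (τ₁,τ₂) the partial derivatives of G exist and ∂G/∂τ₁ + ∂G/∂τ₂ = (1/t) · φ_{z′−1}(τ₁) φ_{−z′−1}(τ₂) − (1/t) · φ_{z′−1}(τ₁) φ_{−z′−1}(τ₂) (1+τ₁)^{−z} (1+τ₂)^{z} − φ_{z′}(τ₁) φ_{−z′}(τ₂) (1+τ₁)^{−z−1} (1+τ₂)^{z−1}. -/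
/-!
Along the diagonal direction `∂/∂τ₁ + ∂/∂τ₂` the denominator `τ₂ - τ₁` of `G` is constant, so
the two `(E - 1)/(τ₂ - τ₁)²` terms of the quotient rule cancel, where
`E = (1+τ₂)^z (1+τ₁)^{-z}`. After rewriting `φ_{a-1}(τ) = a φ_a(τ)/τ` (from `Γ(a+1) = a Γ(a)`)
and `(1+τ)^{b-1} = (1+τ)^b/(1+τ)`, both sides are the same rational expression in `τ₁`, `τ₂`, `E`.
-/

/-- For a positive real `r` and complex `a`, the power `r^a = exp(a · log r)`,
with the real logarithm. -/
noncomputable def cpowR (r : ℝ) (a : ℂ) : ℂ := Complex.exp (a * (Real.log r : ℂ))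

/-- `φ_a(τ) = τ^a / Γ(a+1)` for `τ > 0`. -/
noncomputable def phiFun (a : ℂ) (τ : ℝ) : ℂ := cpowR τ a / Complex.Gamma (a + 1)

/-- `G(τ₁,τ₂) = φ_{z′}(τ₁) φ_{−z′}(τ₂) (1/z) ((1+τ₂)^z (1+τ₁)^{−z} − 1)/(τ₂ − τ₁)`. -/
noncomputable def G (z z' : ℂ) (τ₁ τ₂ : ℝ) : ℂ :=
  phiFun z' τ₁ * phiFun (-z') τ₂ * (1 / z) *
    ((cpowR (1 + τ₂) z * cpowR (1 + τ₁) (-z) - 1) / ((τ₂ : ℂ) - (τ₁ : ℂ)))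

lemma cpowR_sub_one {r : ℝ} (hr : 0 < r) (a : ℂ) : cpowR r (a - 1) = cpowR r a / r := by
  rw [cpowR, cpowR, sub_one_mul, Complex.exp_sub, ← Complex.ofReal_exp, Real.exp_log hr]

lemma phiFun_sub_one {τ : ℝ} (hτ : 0 < τ) {a : ℂ} (ha : a ≠ 0) :
    phiFun (a - 1) τ = a * phiFun a τ / τ := by
  rw [phiFun, phiFun, cpowR_sub_one hτ, sub_add_cancel, Complex.Gamma_add_one a ha]
  by_cases hΓ : Complex.Gamma a = 0
  · simp [hΓ]
  have hτ' : (τ : ℂ) ≠ 0 := by exact_mod_cast hτ.ne'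
  field_simp

lemma HasDerivAt.cpowR {f : ℝ → ℝ} {f' x : ℝ} (hf : HasDerivAt f f' x) (hx : f x ≠ 0) (a : ℂ) :
    HasDerivAt (fun t => cpowR (f t) a) (a * f' / f x * cpowR (f x) a) x := by
  have hlog : HasDerivAt (fun t => ((Real.log (f t) : ℝ) : ℂ)) ((f' / f x : ℝ) : ℂ) x :=
    (hf.log hx).ofReal_comp
  refine (hlog.const_mul a).cexp.congr_deriv ?_
  rw [_root_.cpowR]
  push_cast
  ring

lemma hasDerivAt_phiFun (a : ℂ) {τ : ℝ} (hτ : τ ≠ 0) :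
    HasDerivAt (fun t => phiFun a t) (a / τ * phiFun a τ) τ := by
  refine (((hasDerivAt_id τ).cpowR hτ a).div_const (Complex.Gamma (a + 1))).congr_deriv ?_
  simp only [phiFun, id, Complex.ofReal_one]
  ring

lemma hasDerivAt_G_fst (z z' : ℂ) {τ₁ τ₂ : ℝ} (h₀ : τ₁ ≠ 0) (h₁ : 1 + τ₁ ≠ 0) (hne : τ₁ ≠ τ₂) :
    HasDerivAt (fun t => G z z' t τ₂)
      (phiFun z' τ₁ * phiFun (-z') τ₂ / z *
        (z' / τ₁ * (cpowR (1 + τ₂) z * cpowR (1 + τ₁) (-z) - 1) / (τ₂ - τ₁)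
          + (cpowR (1 + τ₂) z * cpowR (1 + τ₁) (-z) - 1) / (τ₂ - τ₁) ^ 2
          - z * (cpowR (1 + τ₂) z * cpowR (1 + τ₁) (-z)) / ((1 + τ₁) * (τ₂ - τ₁)))) τ₁ := by
  have hD : (τ₂ : ℂ) - τ₁ ≠ 0 := sub_ne_zero.mpr (by exact_mod_cast hne.symm)
  have hpow := ((hasDerivAt_id τ₁).const_add 1).cpowR h₁ (-z)
  have hquot := ((hpow.const_mul (cpowR (1 + τ₂) z)).sub_const 1).div
    ((hasDerivAt_id τ₁).ofReal_comp.const_sub (τ₂ : ℂ)) hD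
  refine ((((hasDerivAt_phiFun z' h₀).mul_const (phiFun (-z') τ₂)).mul_const (1 / z)).mul
    hquot).congr_deriv ?_
  have h₀' : (τ₁ : ℂ) ≠ 0 := by exact_mod_cast h₀
  have h₁' : (1 + τ₁ : ℂ) ≠ 0 := by exact_mod_cast h₁
  simp only [id, Pi.div_apply, Complex.ofReal_one, Complex.ofReal_add]
  field_simp
  ring

lemma hasDerivAt_G_snd (z z' : ℂ) {τ₁ τ₂ : ℝ} (h₀ : τ₂ ≠ 0) (h₁ : 1 + τ₂ ≠ 0) (hne : τ₁ ≠ τ₂) :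
    HasDerivAt (fun t => G z z' τ₁ t)
      (phiFun z' τ₁ * phiFun (-z') τ₂ / z *
        (-z' / τ₂ * (cpowR (1 + τ₂) z * cpowR (1 + τ₁) (-z) - 1) / (τ₂ - τ₁)
          - (cpowR (1 + τ₂) z * cpowR (1 + τ₁) (-z) - 1) / (τ₂ - τ₁) ^ 2
          + z * (cpowR (1 + τ₂) z * cpowR (1 + τ₁) (-z)) / ((1 + τ₂) * (τ₂ - τ₁)))) τ₂ := by
  have hD : (τ₂ : ℂ) - τ₁ ≠ 0 := sub_ne_zero.mpr (by exact_mod_cast hne.symm)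
  have hpow := ((hasDerivAt_id τ₂).const_add 1).cpowR h₁ z
  have hquot := ((hpow.mul_const (cpowR (1 + τ₁) (-z))).sub_const 1).div
    ((hasDerivAt_id τ₂).ofReal_comp.sub_const (τ₁ : ℂ)) hD
  refine ((((hasDerivAt_phiFun (-z') h₀).const_mul (phiFun z' τ₁)).mul_const (1 / z)).mul
    hquot).congr_deriv ?_
  have h₀' : (τ₂ : ℂ) ≠ 0 := by exact_mod_cast h₀
  have h₁' : (1 + τ₂ : ℂ) ≠ 0 := by exact_mod_cast h₁
  simp only [id, Pi.div_apply, Complex.ofReal_one, Complex.ofReal_add]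
  field_simp
  ring

/-- At every point `(τ₁,τ₂)` with `τ₁, τ₂ > 0`, `τ₁ ≠ τ₂`, the partial derivatives of
`G` exist and
`∂G/∂τ₁ + ∂G/∂τ₂ = (1/t) φ_{z′−1}(τ₁) φ_{−z′−1}(τ₂)
  − (1/t) φ_{z′−1}(τ₁) φ_{−z′−1}(τ₂) (1+τ₁)^{−z} (1+τ₂)^{z}
  − φ_{z′}(τ₁) φ_{−z′}(τ₂) (1+τ₁)^{−z−1} (1+τ₂)^{z−1}`, where `t = zz′`. -/
theorem partial_derivatives_of_G (z z' : ℂ) (hz : z ≠ 0) (hz' : ∀ m : ℤ, z' ≠ (m : ℂ))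
    (τ₁ τ₂ : ℝ) (h1 : 0 < τ₁) (h2 : 0 < τ₂) (hne : τ₁ ≠ τ₂) :
    ∃ d₁ d₂ : ℂ,
      HasDerivAt (fun t : ℝ => G z z' t τ₂) d₁ τ₁ ∧
      HasDerivAt (fun t : ℝ => G z z' τ₁ t) d₂ τ₂ ∧
      d₁ + d₂ =
        (1 / (z * z')) * (phiFun (z' - 1) τ₁ * phiFun (-z' - 1) τ₂) -
        (1 / (z * z')) * (phiFun (z' - 1) τ₁ * phiFun (-z' - 1) τ₂ *
          cpowR (1 + τ₁) (-z) * cpowR (1 + τ₂) z) -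
        phiFun z' τ₁ * phiFun (-z') τ₂ *
          cpowR (1 + τ₁) (-z - 1) * cpowR (1 + τ₂) (z - 1) := by
  have hz'₀ : z' ≠ 0 := by simpa using hz' 0
  have hτ₁ : (1 : ℝ) + τ₁ ≠ 0 := by positivity
  have hτ₂ : (1 : ℝ) + τ₂ ≠ 0 := by positivity
  refine ⟨_, _, hasDerivAt_G_fst z z' h1.ne' hτ₁ hne, hasDerivAt_G_snd z z' h2.ne' hτ₂ hne, ?_⟩
  rw [phiFun_sub_one h1 hz'₀, phiFun_sub_one h2 (neg_ne_zero.mpr hz'₀),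
    cpowR_sub_one (by positivity) (-z), cpowR_sub_one (by positivity) z]
  have hD : (τ₂ : ℂ) - τ₁ ≠ 0 := sub_ne_zero.mpr (by exact_mod_cast hne.symm)
  have h1' : (τ₁ : ℂ) ≠ 0 := by exact_mod_cast h1.ne'
  have h2' : (τ₂ : ℂ) ≠ 0 := by exact_mod_cast h2.ne'
  have hτ₁' : (1 + τ₁ : ℂ) ≠ 0 := by exact_mod_cast hτ₁
  have hτ₂' : (1 + τ₂ : ℂ) ≠ 0 := by exact_mod_cast hτ₂
  push_cast
  field_simp
  ring
end
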